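/- arXiv:1604.05090 — 4 statements merged into one kernel-verified Lean document; each statement's English description precedes it below -/
import Mathlib

section
/- Let p ∈ (1/2, 1), n ≥ 1, and 0 ≤ k' ≤ k ≤ 2^n. Then there exist an ordered perfect binary tree t with exactly k leaves labeled 1 maximizing B_p among trees with k ones, and an ordered perfect binary tree t' with exactly k' leaves labeled 1 maximizing B_p among trees with k' ones, such that t majorizes t' entrywise: every leaf position labeled 1 in t' is labeled 1 in t. -/
/-- A perfect (balanced) binary tree of depth `n` with leaves labelled by `α`. -/
inductive BT (α : Type) : ℕ → Type
  | leaf : α → BT α 0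
  | node {n : ℕ} : BT α n → BT α n → BT α (n + 1)

namespace BT

/-- The list of leaf labels, from left to right. -/
def leaves {α : Type} : ∀ {n : ℕ}, BT α n → List α
  | _, .leaf a => [a]
  | _, .node L R => L.leaves ++ R.leaves

/-- Relabel the leaves of a tree. -/
def map {α β : Type} (f : α → β) : ∀ {n : ℕ}, BT α n → BT β n
  | _, .leaf a => .leaf (f a)
  | _, .node L R => .node (L.map f) (R.map f)

end BT

/-- Two trees represent the same draw iff one can be obtained from the other by
swapping the two children subtrees at internal nodes. -/
def BTequiv {α : Type} : ∀ {n : ℕ}, BT α n → BT α n → Prop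
  | 0, .leaf a, .leaf b => a = b
  | _ + 1, .node L R, .node L' R' =>
      (BTequiv L L' ∧ BTequiv R R') ∨ (BTequiv L R' ∧ BTequiv R L')

/-- A draw: each of the `N` players occurs exactly once among the leaves. -/
def IsDraw {N n : ℕ} (t : BT (Fin N) n) : Prop :=
  ∀ i : Fin N, t.leaves.count i = 1

/-- The winning distribution of a knockout tournament: `wd P t i` is the probability
that player `i` wins the (sub)tournament with draw `t` and comparison matrix `P`. -/
noncomputable def wd {N : ℕ} (P : Fin N → Fin N → ℝ) :
    ∀ {n : ℕ}, BT (Fin N) n → Fin N → ℝ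
  | _, .leaf j => fun i => if i = j then 1 else 0
  | _, .node L R => fun i =>
      wd P L i * (∑ j, wd P R j * P i j) + wd P R i * (∑ j, wd P L j * P i j)

/-- `P` is a comparison matrix. -/
def IsCompMatrix {N : ℕ} (P : Fin N → Fin N → ℝ) : Prop :=
  ∀ i j : Fin N, i ≠ j → 0 ≤ P i j ∧ P i j ≤ 1 ∧ P i j + P j i = 1

/-- `P` is deterministic: every off-diagonal entry is 0 or 1. -/
def IsDet {N : ℕ} (P : Fin N → Fin N → ℝ) : Prop :=
  ∀ i j : Fin N, i ≠ j → P i j = 0 ∨ P i j = 1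

/-- The set `𝒫(P,ε)` of ε-perturbations of `P`. -/
def perturbs {N : ℕ} (P : Fin N → Fin N → ℝ) (ε : ℝ) : Set (Fin N → Fin N → ℝ) :=
  {P' | IsCompMatrix P' ∧ ∀ i j : Fin N, i ≠ j → |P' i j - P i j| ≤ ε}

/-- The ε-guaranteed winning probability `wp_ε(i,P,σ)`. -/
noncomputable def wpe {N n : ℕ} (i : Fin N) (P : Fin N → Fin N → ℝ) (ε : ℝ)
    (t : BT (Fin N) n) : ℝ :=
  sInf ((fun P' => wd P' t i) '' perturbs P ε)

/-- The comparison matrix of the hard `n`-round tournament `H_n` (players 0-indexed):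
for `i < j`, player `i` beats player `j` iff `i = j - 2 ^ v` where `2 ^ v` is the largest
power of 2 dividing `j` (in 0-indexed numbering). -/
noncomputable def hardP (n : ℕ) : Fin (2 ^ n) → Fin (2 ^ n) → ℝ := fun i j =>
  if i = j then 0
  else if (i : ℕ) < (j : ℕ) then
    (if (i : ℕ) + 2 ^ padicValNat 2 (j : ℕ) = (j : ℕ) then 1 else 0)
  else
    (if (j : ℕ) + 2 ^ padicValNat 2 (i : ℕ) = (i : ℕ) then 0 else 1)

/-- The tree of depth `n` whose leaves are `s, s+1, …, s + 2^n - 1` from left to right. -/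
def ordTree : (n : ℕ) → ℕ → BT ℕ n
  | 0, s => .leaf s
  | n + 1, s => .node (ordTree n s) (ordTree n (s + 2 ^ n))

/-- The identity draw, placing players `0, 1, …, 2^n - 1` on the leaves in order. -/
def idDraw (n : ℕ) : BT (Fin (2 ^ n)) n :=
  (ordTree n 0).map (fun k => ⟨k % 2 ^ n, Nat.mod_lt _ (by positivity)⟩)

/-- `f_p(x,y) = p(x+y) + (1-2p)xy`. -/
def fp (p x y : ℝ) : ℝ := p * (x + y) + (1 - 2 * p) * x * y

/-- `B_p` on trees with real leaf labels. -/
noncomputable def Bp (p : ℝ) : ∀ {n : ℕ}, BT ℝ n → ℝ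
  | _, .leaf x => x
  | _, .node L R => fp p (Bp p L) (Bp p R)

/-- Group a list into consecutive pairs. -/
def pairList {α : Type} : List α → List (α × α)
  | a :: b :: rest => (a, b) :: pairList rest
  | _ => []

/-- The first-round matches of a draw: the consecutive sibling pairs of leaves. -/
def firstPairs {α : Type} {n : ℕ} (t : BT α n) : List (α × α) := pairList t.leaves

/-- A draw is mixed (w.r.t. the set `B` of big players) if every first-round match
pairs a big player with a small player. -/
def MixedDraw {N n : ℕ} (B : Finset (Fin N)) (t : BT (Fin N) n) : Prop :=
  ∀ q ∈ firstPairs t, ((q.1 ∈ B) ↔ q.2 ∉ B)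

/-- Number of leaves labelled `1`. -/
noncomputable def ones {n : ℕ} (t : BT ℝ n) : ℕ := t.leaves.count 1

/-- All leaf labels are `0` or `1`. -/
def ZeroOne {n : ℕ} (t : BT ℝ n) : Prop := ∀ x ∈ t.leaves, x = 0 ∨ x = 1

/-- `P[kl←t]`: the matrix agreeing with `P` except `P k l = t` and `P l k = 1 - t`. -/
def updPair {N : ℕ} (P : Fin N → Fin N → ℝ) (k l : Fin N) (t : ℝ) :
    Fin N → Fin N → ℝ :=
  fun i j => if i = k ∧ j = l then t else if i = l ∧ j = k then 1 - t else P i j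

/-- Perturb a deterministic matrix: for each pair `(w, l) ∈ S` (winner first),
set `P w l = 1 - ε` and `P l w = ε`; other entries unchanged. -/
def detPerturb {N : ℕ} (P : Fin N → Fin N → ℝ) (S : Finset (Fin N × Fin N)) (ε : ℝ) :
    Fin N → Fin N → ℝ :=
  fun i j => if (i, j) ∈ S then 1 - ε else if (j, i) ∈ S then ε else P i j

/-- Swap the result of the single match between `a` and `b`. -/
def swapPair {N : ℕ} (P : Fin N → Fin N → ℝ) (a b : Fin N) : Fin N → Fin N → ℝ :=
  fun i j => if i = a ∧ j = b then P b a else if i = b ∧ j = a then P a b else P i j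

/-- The pair `(a,b)` (with `a` the winner) is crucial for `i` in `C(P,σ)`. -/
def Crucial {N n : ℕ} (P : Fin N → Fin N → ℝ) (σ : BT (Fin N) n) (i : Fin N)
    (a b : Fin N) : Prop :=
  a ≠ b ∧ P a b = 1 ∧ wd (swapPair P a b) σ i = 0

section BigOptimal

/-- The balanced tree with `k` ones. -/
def balT : (n : ℕ) → ℕ → BT ℝ n
  | 0, k => .leaf (if 1 ≤ k then 1 else 0)
  | n+1, k => .node (balT n ((k+1)/2)) (balT n (k/2))

/-- `mB p n k = Bp p (balT n k)`. -/
noncomputable def mB (p : ℝ) (n k : ℕ) : ℝ := Bp p (balT n k)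

/-- `g_p(x) = p + (1-2p)x`. -/
def gp (p x : ℝ) : ℝ := p + (1 - 2*p) * x

lemma mB_succ (p : ℝ) (n k : ℕ) :
    mB p (n+1) k = fp p (mB p n ((k+1)/2)) (mB p n (k/2)) := rfl

lemma fp_comm (p x y : ℝ) : fp p x y = fp p y x := by unfold fp; ring

lemma mB_even (p : ℝ) (n j : ℕ) :
    mB p (n+1) (2*j) = fp p (mB p n j) (mB p n j) := by
  rw [mB_succ]
  exact congrArg₂ (fp p) (congrArg (mB p n) (by omega)) (congrArg (mB p n) (by omega))

lemma mB_odd (p : ℝ) (n j : ℕ) :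
    mB p (n+1) (2*j+1) = fp p (mB p n (j+1)) (mB p n j) := by
  rw [mB_succ]
  exact congrArg₂ (fp p) (congrArg (mB p n) (by omega)) (congrArg (mB p n) (by omega))

lemma c_pos {p : ℝ} (hp : 1/2 < p) (hp1 : p < 1) : 0 < p * (1-p) * (2*p-1) :=
  mul_pos (mul_pos (by linarith) (by linarith)) (by linarith)

lemma gp_pos {p x : ℝ} (hp : 1/2 < p) (hp1 : p < 1) (hx : x ≤ 1) : 0 < gp p x := by
  unfold gp; nlinarith

lemma zeroOne_balT (n k : ℕ) : ZeroOne (balT n k) := by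
  induction n generalizing k with
  | zero =>
    intro x hx
    simp only [balT, BT.leaves, List.mem_singleton] at hx
    subst hx
    split_ifs <;> simp
  | succ n ih =>
    intro x hx
    simp only [balT, BT.leaves, List.mem_append] at hx
    rcases hx with hx | hx
    · exact ih _ x hx
    · exact ih _ x hx

lemma zeroOne_node_left {n : ℕ} {L R : BT ℝ n} (h : ZeroOne (BT.node L R)) :
    ZeroOne L := fun x hx => h x (by simp [BT.leaves, List.mem_append]; exact Or.inl hx)

lemma zeroOne_node_right {n : ℕ} {L R : BT ℝ n} (h : ZeroOne (BT.node L R)) :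
    ZeroOne R := fun x hx => h x (by simp [BT.leaves, List.mem_append]; exact Or.inr hx)

lemma fp_bounds {p x y : ℝ} (hp : 1/2 < p) (hp1 : p < 1)
    (hx0 : 0 ≤ x) (hx1 : x ≤ 1) (hy0 : 0 ≤ y) (hy1 : y ≤ 1) :
    0 ≤ fp p x y ∧ fp p x y ≤ 1 := by
  unfold fp
  constructor
  · nlinarith [mul_nonneg hx0 hy0, mul_nonneg (mul_nonneg hx0 hy0) (sub_nonneg.2 hp1.le),
      mul_nonneg hx0 (sub_nonneg.2 hy1), mul_nonneg hy0 (sub_nonneg.2 hx1)]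
  · nlinarith [mul_nonneg (sub_nonneg.2 hx1) (sub_nonneg.2 hy1),
      mul_nonneg hx0 (sub_nonneg.2 hy1), mul_nonneg hy0 (sub_nonneg.2 hx1)]

lemma Bp_bounds {p : ℝ} (hp : 1/2 < p) (hp1 : p < 1) :
    ∀ {n : ℕ} (s : BT ℝ n), ZeroOne s → 0 ≤ Bp p s ∧ Bp p s ≤ 1 := by
  intro n s
  induction s with
  | leaf a =>
    intro hs
    have := hs a (by simp [BT.leaves])
    rcases this with h | h <;> subst h <;> norm_num [Bp]
  | node L R ihL ihR =>
    intro hs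
    have hL := ihL (zeroOne_node_left hs)
    have hR := ihR (zeroOne_node_right hs)
    exact fp_bounds hp hp1 hL.1 hL.2 hR.1 hR.2

lemma mB_bounds {p : ℝ} (hp : 1/2 < p) (hp1 : p < 1) (n k : ℕ) :
    0 ≤ mB p n k ∧ mB p n k ≤ 1 :=
  Bp_bounds hp hp1 _ (zeroOne_balT n k)

lemma fp_mono {p x x' y y' : ℝ} (hp : 1/2 < p) (hp1 : p < 1)
    (hx : x ≤ x') (hy : y ≤ y') (hx'1 : x' ≤ 1) (hy1 : y ≤ 1) :
    fp p x y ≤ fp p x' y' := by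
  have h1 : 0 < gp p y := gp_pos hp hp1 hy1
  have h2 : 0 < gp p x' := gp_pos hp hp1 hx'1
  have hid : fp p x' y' - fp p x y = (x' - x) * gp p y + (y' - y) * gp p x' := by
    unfold fp gp; ring
  nlinarith [mul_nonneg (sub_nonneg.2 hx) h1.le, mul_nonneg (sub_nonneg.2 hy) h2.le]

lemma mB_mono {p : ℝ} (hp : 1/2 < p) (hp1 : p < 1) :
    ∀ (n : ℕ) {k k' : ℕ}, k ≤ k' → mB p n k ≤ mB p n k' := by
  intro n
  induction n with
  | zero =>
    intro k k' h
    show (if 1 ≤ k then (1:ℝ) else 0) ≤ (if 1 ≤ k' then (1:ℝ) else 0)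
    split_ifs <;> first | (exfalso; omega) | norm_num
  | succ n ih =>
    intro k k' h
    rw [mB_succ, mB_succ]
    exact fp_mono hp hp1 (ih (by omega)) (ih (by omega))
      (mB_bounds hp hp1 _ _).2 (mB_bounds hp hp1 _ _).2

/-- Consecutive monotonicity of `r(k) = Δm(k)/g(m(k))`, in cross-multiplied form. -/
lemma rc {p : ℝ} (hp : 1/2 < p) (hp1 : p < 1) :
    ∀ (n k : ℕ),
      (mB p n (k+2) - mB p n (k+1)) * gp p (mB p n k)
        ≤ (mB p n (k+1) - mB p n k) * gp p (mB p n (k+1)) := by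
  intro n
  induction n with
  | zero =>
    intro k
    show ((if 1 ≤ k+2 then (1:ℝ) else 0) - (if 1 ≤ k+1 then (1:ℝ) else 0)) * gp p (if 1 ≤ k then (1:ℝ) else 0)
      ≤ ((if 1 ≤ k+1 then (1:ℝ) else 0) - (if 1 ≤ k then (1:ℝ) else 0)) * gp p (if 1 ≤ k+1 then (1:ℝ) else 0)
    rw [if_pos (show 1 ≤ k+2 by omega), if_pos (show 1 ≤ k+1 by omega)]
    rcases Nat.eq_zero_or_pos k with rfl | hk
    · rw [if_neg (show ¬ 1 ≤ 0 by omega)]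
      unfold gp; nlinarith
    · rw [if_pos (show 1 ≤ k from hk)]
  | succ n ih =>
    intro k
    rcases Nat.even_or_odd k with ⟨j, rfl⟩ | ⟨j, rfl⟩
    · -- k = j + j : even case, pure identity
      rw [show j+j+2 = 2*(j+1) from by omega, show j+j+1 = 2*j+1 from by omega,
        show j+j = 2*j from by omega, mB_even p n (j+1), mB_odd p n j, mB_even p n j]
      set x := mB p n j with hxdef
      set y := mB p n (j+1) with hydef
      have hxy : x ≤ y := mB_mono hp hp1 n (by omega)
      have hid : (fp p y x - fp p x x) * gp p (fp p y x)
          - (fp p y y - fp p y x) * gp p (fp p x x)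
          = (y - x)^2 * (p * (1-p) * (2*p-1)) := by
        unfold fp gp; ring
      linarith [hid, mul_nonneg (sq_nonneg (y - x)) (c_pos hp hp1).le]
    · -- k = 2j+1 : odd case, uses IH
      rw [show 2*j+1+2 = 2*(j+1)+1 from by omega, show 2*j+1+1 = 2*(j+1) from by omega,
        mB_odd p n (j+1), mB_even p n (j+1), mB_odd p n j]
      set x := mB p n j with hxdef
      set y := mB p n (j+1) with hydef
      set z := mB p n (j+2) with hzdef
      have hxy : x ≤ y := mB_mono hp hp1 n (by omega)
      have hx1 : x ≤ 1 := (mB_bounds hp hp1 n j).2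
      have hy1 : y ≤ 1 := (mB_bounds hp hp1 n (j+1)).2
      have hgx : 0 < gp p x := gp_pos hp hp1 hx1
      have hgy : 0 < gp p y := gp_pos hp hp1 hy1
      have hfyx1 : fp p y x ≤ 1 :=
        (fp_bounds hp hp1 (mB_bounds hp hp1 n (j+1)).1 hy1 (mB_bounds hp hp1 n j).1 hx1).2
      have hgf1 : 0 < gp p (fp p y x) := gp_pos hp hp1 hfyx1
      have hIH := ih j
      rw [← hxdef, ← hydef, ← hzdef] at hIH
      -- hIH : (z - y) * gp p x ≤ (y - x) * gp p y
      have hC : gp p x * gp p (fp p y y) - gp p y * gp p (fp p y x)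
          = (y - x) * (p * (1-p) * (2*p-1)) := by
        unfold fp gp; ring
      -- key: (z-y) * gp (fp y x) ≤ (y-x) * gp (fp y y)
      have key : (z - y) * gp p (fp p y x) ≤ (y - x) * gp p (fp p y y) := by
        have h1 : (z - y) * gp p x * gp p (fp p y x)
            ≤ (y - x) * gp p y * gp p (fp p y x) :=
          mul_le_mul_of_nonneg_right hIH hgf1.le
        have h2 : (y - x) * (gp p x * gp p (fp p y y) - gp p y * gp p (fp p y x))
            = (y - x) * ((y - x) * (p * (1-p) * (2*p-1))) := by rw [hC]
        have h3 : 0 ≤ (y - x) * ((y - x) * (p * (1-p) * (2*p-1))) :=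
          mul_nonneg (by linarith) (mul_nonneg (by linarith) (c_pos hp hp1).le)
        refine le_of_mul_le_mul_left ?_ hgx
        nlinarith [h1, h2, h3]
      have e1 : fp p z y - fp p y y = (z - y) * gp p y := by unfold fp gp; ring
      have e2 : fp p y y - fp p y x = (y - x) * gp p y := by unfold fp gp; ring
      rw [e1, e2]
      calc (z - y) * gp p y * gp p (fp p y x)
          = gp p y * ((z - y) * gp p (fp p y x)) := by ring
        _ ≤ gp p y * ((y - x) * gp p (fp p y y)) := by
            exact mul_le_mul_of_nonneg_left key hgy.le
        _ = (y - x) * gp p y * gp p (fp p y y) := by ring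

/-- Full monotonicity of `r`. -/
lemma r_anti {p : ℝ} (hp : 1/2 < p) (hp1 : p < 1) (n : ℕ) :
    ∀ (i j : ℕ), j ≤ i →
      (mB p n (i+1) - mB p n i) * gp p (mB p n j)
        ≤ (mB p n (j+1) - mB p n j) * gp p (mB p n i) := by
  intro i
  induction i with
  | zero => intro j hj; interval_cases j; exact le_refl _
  | succ i ih =>
    intro j hj
    rcases Nat.eq_or_lt_of_le hj with rfl | hj'
    · exact le_refl _
    · have hji : j ≤ i := by omega
      have h1 := ih j hji
      have h2 := rc hp hp1 n i
      have hgi : 0 < gp p (mB p n i) := gp_pos hp hp1 (mB_bounds hp hp1 n i).2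
      have hgj : 0 < gp p (mB p n j) := gp_pos hp hp1 (mB_bounds hp hp1 n j).2
      have hgi1 : 0 < gp p (mB p n (i+1)) := gp_pos hp hp1 (mB_bounds hp hp1 n (i+1)).2
      refine le_of_mul_le_mul_left ?_ hgi
      have h2' := mul_le_mul_of_nonneg_right h2 hgj.le
      have h1' := mul_le_mul_of_nonneg_right h1 hgi1.le
      nlinarith [h1', h2']

/-- Exchange inequality: moving one `1` from the larger side to the smaller side helps. -/
lemma exchange {p : ℝ} (hp : 1/2 < p) (hp1 : p < 1) (n : ℕ) {a b : ℕ} (hba : b ≤ a) :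
    fp p (mB p n (a+1)) (mB p n b) ≤ fp p (mB p n a) (mB p n (b+1)) := by
  have h := r_anti hp hp1 n a b hba
  have hid : fp p (mB p n (a+1)) (mB p n b) - fp p (mB p n a) (mB p n (b+1))
      = (mB p n (a+1) - mB p n a) * gp p (mB p n b)
        - (mB p n (b+1) - mB p n b) * gp p (mB p n a) := by
    unfold fp gp; ring
  linarith

/-- The balanced split is optimal. -/
lemma balance {p : ℝ} (hp : 1/2 < p) (hp1 : p < 1) (n : ℕ) :
    ∀ (d a b : ℕ), a - b ≤ d → b - a ≤ d →
      fp p (mB p n a) (mB p n b)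
        ≤ fp p (mB p n ((a+b+1)/2)) (mB p n ((a+b)/2)) := by
  intro d
  induction d with
  | zero =>
    intro a b h1 h2
    have : a = b := by omega
    subst this
    rw [show (a+a+1)/2 = a from by omega, show (a+a)/2 = a from by omega]
  | succ d ih =>
    intro a b h1 h2
    by_cases hc1 : b + 2 ≤ a
    · have hex := exchange hp hp1 n (a := a - 1) (b := b) (by omega)
      rw [show a - 1 + 1 = a from by omega] at hex
      have hih := ih (a - 1) (b + 1) (by omega) (by omega)
      rw [show a - 1 + (b + 1) = a + b from by omega] at hih
      exact hex.trans hih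
    · by_cases hc2 : a + 2 ≤ b
      · rw [fp_comm]
        have hex := exchange hp hp1 n (a := b - 1) (b := a) (by omega)
        rw [show b - 1 + 1 = b from by omega] at hex
        have hih := ih (b - 1) (a + 1) (by omega) (by omega)
        rw [show b - 1 + (a + 1) = a + b from by omega] at hih
        exact hex.trans hih
      · by_cases hba : b ≤ a
        · rw [show (a+b+1)/2 = a from by omega, show (a+b)/2 = b from by omega]
        · rw [show (a+b+1)/2 = b from by omega, show (a+b)/2 = a from by omega, fp_comm]

lemma ones_node {n : ℕ} (L R : BT ℝ n) :
    ones (BT.node L R) = ones L + ones R := by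
  simp [ones, BT.leaves, List.count_append]

/-- Every 0-1 tree is dominated by the balanced tree with the same number of ones. -/
lemma Bp_le_mB {p : ℝ} (hp : 1/2 < p) (hp1 : p < 1) :
    ∀ {n : ℕ} (s : BT ℝ n), ZeroOne s → Bp p s ≤ mB p n (ones s) := by
  intro n s
  induction s with
  | leaf a =>
    intro hs
    have := hs a (by simp [BT.leaves])
    rcases this with h | h <;> subst h
    · have h0 : ones (BT.leaf (0:ℝ)) = 0 := by
        simp [ones, BT.leaves, List.count_singleton']
      rw [h0]
      show (0:ℝ) ≤ (if 1 ≤ 0 then (1:ℝ) else 0)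
      norm_num
    · have h1 : ones (BT.leaf (1:ℝ)) = 1 := by
        simp [ones, BT.leaves, List.count_singleton']
      rw [h1]
      show (1:ℝ) ≤ (if 1 ≤ 1 then (1:ℝ) else 0)
      norm_num
  | node L R ihL ihR =>
    intro hs
    have hL := zeroOne_node_left hs
    have hR := zeroOne_node_right hs
    have hbR := Bp_bounds hp hp1 R hR
    rw [ones_node]
    show fp p (Bp p L) (Bp p R) ≤ _
    calc fp p (Bp p L) (Bp p R)
        ≤ fp p (mB p _ (ones L)) (mB p _ (ones R)) :=
          fp_mono hp hp1 (ihL hL) (ihR hR) (mB_bounds hp hp1 _ _).2 hbR.2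
      _ ≤ fp p (mB p _ ((ones L + ones R + 1)/2)) (mB p _ ((ones L + ones R)/2)) :=
          balance hp hp1 _ (ones L + ones R) _ _ (by omega) (by omega)
      _ = mB p _ (ones L + ones R) := (mB_succ p _ _).symm

lemma ones_balT : ∀ (n k : ℕ), k ≤ 2^n → ones (balT n k) = k := by
  intro n
  induction n with
  | zero =>
    intro k hk
    interval_cases k
    · show ones (BT.leaf (if 1 ≤ 0 then (1:ℝ) else 0)) = 0
      norm_num [ones, BT.leaves, List.count_singleton']
    · show ones (BT.leaf (if 1 ≤ 1 then (1:ℝ) else 0)) = 1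
      norm_num [ones, BT.leaves, List.count_singleton']
  | succ n ih =>
    intro k hk
    have h2 : 2^(n+1) = 2 * 2^n := by ring
    show ones (BT.node (balT n ((k+1)/2)) (balT n (k/2))) = k
    rw [ones_node, ih _ (by omega), ih _ (by omega)]
    omega

lemma balT_forall₂ : ∀ (n k k' : ℕ), k ≤ k' →
    List.Forall₂ (· ≤ ·) (balT n k).leaves (balT n k').leaves := by
  intro n
  induction n with
  | zero =>
    intro k k' h
    show List.Forall₂ (· ≤ ·) [if 1 ≤ k then (1:ℝ) else 0] [if 1 ≤ k' then (1:ℝ) else 0]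
    refine List.Forall₂.cons ?_ List.Forall₂.nil
    split_ifs <;> first | (exfalso; omega) | norm_num
  | succ n ih =>
    intro k k' h
    show List.Forall₂ (· ≤ ·) ((balT n ((k+1)/2)).leaves ++ (balT n (k/2)).leaves)
      ((balT n ((k'+1)/2)).leaves ++ (balT n (k'/2)).leaves)
    exact List.rel_append (ih _ _ (by omega)) (ih _ _ (by omega))

end BigOptimal

/-- for `k' ≤ k` there are big-optimal trees `t` (with `k` ones) and
`t'` (with `k'` ones) such that `t` majorizes `t'` entrywise. -/
theorem big_optimal_majorizes (p : ℝ) (hp : p ∈ Set.Ioo (1 / 2 : ℝ) 1)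
    (n : ℕ) (hn : 1 ≤ n) (k k' : ℕ) (hk' : k' ≤ k) (hk : k ≤ 2 ^ n) :
    ∃ (t t' : BT ℝ n),
      ZeroOne t ∧ ones t = k ∧
      (∀ s : BT ℝ n, ZeroOne s → ones s = k → Bp p s ≤ Bp p t) ∧
      ZeroOne t' ∧ ones t' = k' ∧
      (∀ s : BT ℝ n, ZeroOne s → ones s = k' → Bp p s ≤ Bp p t') ∧
      List.Forall₂ (· ≤ ·) t'.leaves t.leaves := by
  obtain ⟨hp2, hp1⟩ := hp
  refine ⟨balT n k, balT n k', zeroOne_balT n k, ones_balT n k hk, ?_,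
    zeroOne_balT n k', ones_balT n k' (hk'.trans hk), ?_, balT_forall₂ n k' k hk'⟩
  · intro s hs h1
    have h := Bp_le_mB hp2 hp1 s hs
    rw [h1] at h
    exact h
  · intro s hs h1
    have h := Bp_le_mB hp2 hp1 s hs
    rw [h1] at h
    exact h
end

section
/- Consider a big-vs-small tournament on N = 2^n players with big set B of size 2^{n−1} and big-beats-small probability p ∈ [0,1] (entries between two big or between two small players arbitrary). For any draw σ, the probability that some big player wins equals B_p applied to the {0,1} leaf labeling induced by σ, i.e. Σ_{i ∈ B} wp(i,P,σ) = B_p(t_σ), where t_σ labels a leaf 1 if the player placed there belongs to B and 0 otherwise. -/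
/-!
Induct on the draw. At a node with subtrees `L`, `R`, let `a`, `b` be the probabilities
that a big player wins `L`, resp. `R`. When both finalists are big (probability `ab`)
a big player wins whatever `P` says between them, since `P i j + P j i = 1`; when exactly
one is big (probability `a(1-b) + b(1-a)`) the big one wins with probability `p`. Hence
a big player wins the node with probability `ab + p(a + b - 2ab) = f_p(a, b)`.
-/

open Finset

section KnockoutTournament

variable {N : ℕ} {P : Fin N → Fin N → ℝ}

lemma IsDraw.nodup {m : ℕ} {t : BT (Fin N) m} (ht : IsDraw t) : t.leaves.Nodup :=
  List.nodup_iff_count_le_one.mpr fun i => (ht i).le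

lemma wd_eq_zero_of_not_mem_leaves {m : ℕ} {t : BT (Fin N) m} {i : Fin N}
    (hi : i ∉ t.leaves) : wd P t i = 0 := by
  induction t with
  | leaf j => simp_all [BT.leaves, wd]
  | node L R ihL ihR =>
    simp only [BT.leaves, List.mem_append, not_or] at hi
    simp [wd, ihL hi.1, ihR hi.2]

lemma sum_wd_node {m : ℕ} (L R : BT (Fin N) m) (s : Finset (Fin N)) :
    ∑ i ∈ s, wd P (.node L R) i =
      ∑ i ∈ s, ∑ j, (wd P L i * wd P R j * P i j + wd P R i * wd P L j * P i j) := by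
  refine sum_congr rfl fun i _ => ?_
  simp only [wd, mul_sum, ← sum_add_distrib, mul_assoc]

variable (hP : ∀ i j, i ≠ j → P i j + P j i = 1)
include hP

lemma sum_sum_wd_match_eq_mul {m : ℕ} {L R : BT (Fin N) m}
    (hLR : ∀ a ∈ L.leaves, ∀ b ∈ R.leaves, a ≠ b) (s : Finset (Fin N)) :
    ∑ i ∈ s, ∑ j ∈ s, (wd P L i * wd P R j * P i j + wd P R i * wd P L j * P i j) =
      (∑ i ∈ s, wd P L i) * ∑ j ∈ s, wd P R j := by
  have hpair : ∀ i j, wd P L i * wd P R j * (P i j + P j i) = wd P L i * wd P R j := by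
    intro i j
    by_cases hi : i ∈ L.leaves
    · by_cases hj : j ∈ R.leaves
      · rw [hP i j (hLR i hi j hj), mul_one]
      · simp [wd_eq_zero_of_not_mem_leaves hj]
    · simp [wd_eq_zero_of_not_mem_leaves hi]
  calc ∑ i ∈ s, ∑ j ∈ s, (wd P L i * wd P R j * P i j + wd P R i * wd P L j * P i j)
      = ∑ i ∈ s, ∑ j ∈ s, wd P L i * wd P R j * P i j
          + ∑ i ∈ s, ∑ j ∈ s, wd P R j * wd P L i * P j i := by
        rw [sum_comm (f := fun i j => wd P R j * wd P L i * P j i), ← sum_add_distrib]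
        exact sum_congr rfl fun i _ => sum_add_distrib
    _ = ∑ i ∈ s, ∑ j ∈ s, wd P L i * wd P R j := by
        rw [← sum_add_distrib]
        refine sum_congr rfl fun i _ => ?_
        rw [← sum_add_distrib]
        exact sum_congr rfl fun j _ => by linear_combination hpair i j
    _ = (∑ i ∈ s, wd P L i) * ∑ j ∈ s, wd P R j := (sum_mul_sum _ _ _ _).symm

lemma sum_wd_eq_one {m : ℕ} {t : BT (Fin N) m} (ht : t.leaves.Nodup) : ∑ i, wd P t i = 1 := by
  induction t with
  | leaf j => simp [wd]
  | node L R ihL ihR =>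
    obtain ⟨hL, hR, hLR⟩ := List.nodup_append.mp ht
    rw [sum_wd_node, sum_sum_wd_match_eq_mul hP hLR, ihL hL, ihR hR, one_mul]

variable {p : ℝ} {B : Finset (Fin N)} (hBS : ∀ b ∈ B, ∀ s, s ∉ B → P b s = p)
include hBS

lemma sum_wd_node_eq_fp {m : ℕ} {L R : BT (Fin N) m} (hL : L.leaves.Nodup)
    (hR : R.leaves.Nodup) (hLR : ∀ a ∈ L.leaves, ∀ b ∈ R.leaves, a ≠ b) :
    ∑ i ∈ B, wd P (.node L R) i = fp p (∑ i ∈ B, wd P L i) (∑ i ∈ B, wd P R i) := by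
  have hcompl : ∀ {k} {t : BT (Fin N) k}, t.leaves.Nodup →
      ∑ j ∈ Bᶜ, wd P t j = 1 - ∑ j ∈ B, wd P t j := fun ht => by
    rw [← sum_wd_eq_one hP ht, ← sum_add_sum_compl B, add_sub_cancel_left]
  have hmixed :
      ∑ i ∈ B, ∑ j ∈ Bᶜ, (wd P L i * wd P R j * P i j + wd P R i * wd P L j * P i j) =
        p * ((∑ i ∈ B, wd P L i) * ∑ j ∈ Bᶜ, wd P R j
          + (∑ i ∈ B, wd P R i) * ∑ j ∈ Bᶜ, wd P L j) := by
    rw [sum_mul_sum, sum_mul_sum, ← sum_add_distrib, mul_sum]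
    refine sum_congr rfl fun i hi => ?_
    rw [← sum_add_distrib, mul_sum]
    refine sum_congr rfl fun j hj => ?_
    rw [hBS i hi j (mem_compl.mp hj)]
    ring
  rw [sum_wd_node]
  simp_rw [← sum_add_sum_compl B (fun j => _ + _)]
  rw [sum_add_distrib, sum_sum_wd_match_eq_mul hP hLR, hmixed, hcompl hL, hcompl hR, fp]
  ring

theorem sum_wd_big_eq_Bp {m : ℕ} {t : BT (Fin N) m} (ht : t.leaves.Nodup) :
    ∑ i ∈ B, wd P t i = Bp p (t.map fun i => if i ∈ B then (1 : ℝ) else 0) := by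
  induction t with
  | leaf j => simp [wd, BT.map, Bp, sum_ite_eq']
  | node L R ihL ihR =>
    obtain ⟨hL, hR, hLR⟩ := List.nodup_append.mp ht
    rw [sum_wd_node_eq_fp hP hBS hL hR hLR, ihL hL, ihR hR]
    rfl

end KnockoutTournament

theorem big_win_prob_eq_Bp_general (n : ℕ)
    (p : ℝ)
    (B : Finset (Fin (2 ^ n)))
    (P : Fin (2 ^ n) → Fin (2 ^ n) → ℝ) (hP : IsCompMatrix P)
    (hbs : ∀ b ∈ B, ∀ s, s ∉ B → P b s = p)
    (σ : BT (Fin (2 ^ n)) n) (hσ : IsDraw σ) :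
    (∑ i ∈ B, wd P σ i) =
      Bp p (σ.map (fun i => if i ∈ B then (1 : ℝ) else 0)) :=
  sum_wd_big_eq_Bp (fun i j hij => (hP i j hij).2.2) hbs hσ.nodup

/-- in a big-vs-small tournament, the probability that a big player
wins equals `B_p` applied to the induced `{0,1}` leaf labeling of the draw. -/
theorem big_win_prob_eq_Bp (n : ℕ) (hn : 1 ≤ n)
    (p : ℝ) (hp : p ∈ Set.Icc (0 : ℝ) 1)
    (B : Finset (Fin (2 ^ n))) (hB : B.card = 2 ^ (n - 1))
    (P : Fin (2 ^ n) → Fin (2 ^ n) → ℝ) (hP : IsCompMatrix P)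
    (hbs : ∀ b ∈ B, ∀ s, s ∉ B → P b s = p)
    (σ : BT (Fin (2 ^ n)) n) (hσ : IsDraw σ) :
    (∑ i ∈ B, wd P σ i) =
      Bp p (σ.map (fun i => if i ∈ B then (1 : ℝ) else 0)) :=
  big_win_prob_eq_Bp_general n p B P hP hbs σ hσ
end

section
/- For every comparison matrix P for N = 2^n players, every draw σ, every player i*, and every ε > 0, the infimum wp_ε(i*,P,σ) = inf_{P' ∈ 𝒫(P,ε)} wp(i*,P',σ) is attained: there exists P' ∈ 𝒫(P,ε) with wp(i*,P',σ) = wp_ε(i*,P,σ) such that, in addition, for every pair i ≠ j either |P'_ij − P_ij| = ε or P'_ij ∈ {0,1}. -/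
/-! The winning probability is continuous in `P'` and ignores the diagonal, so the infimum
over `𝒫(P,ε)` is a minimum over a compact box. As the players of a draw are distinct, two
players meet at most once, so the winning probability is an affine function of each single
entry `P'_kl` (with `P'_lk = 1 - P'_kl`). Moving the entries of a minimiser one at a time to
the better endpoint of their admissible interval `[max 0 (P_kl - ε), min 1 (P_kl + ε)]`
therefore keeps it a minimiser. -/

open Finset

variable {N : ℕ}

section WinningDistribution

variable {P Q : Fin N → Fin N → ℝ}

lemma wd_eq_zero_of_notMem {n : ℕ} {t : BT (Fin N) n} {i : Fin N} (hi : i ∉ t.leaves) :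
    wd P t i = 0 := by
  induction t with
  | leaf a => simp_all [wd, BT.leaves]
  | node L R ihL ihR =>
    simp only [BT.leaves, List.mem_append, not_or] at hi
    simp [wd, ihL hi.1, ihR hi.2]

lemma wd_mul_congr {n : ℕ} {t : BT (Fin N) n} {i : Fin N} {a b : ℝ}
    (h : i ∈ t.leaves → a = b) : wd P t i * a = wd P t i * b := by
  by_cases hi : i ∈ t.leaves
  · rw [h hi]
  · simp [wd_eq_zero_of_notMem hi]

lemma sum_wd_mul_congr {n : ℕ} {t : BT (Fin N) n} {f g : Fin N → ℝ}
    (h : ∀ j ∈ t.leaves, f j = g j) : ∑ j, wd P t j * f j = ∑ j, wd P t j * g j :=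
  sum_congr rfl fun j _ => wd_mul_congr (h j)

lemma wd_congr {n : ℕ} {t : BT (Fin N) n} (hnd : t.leaves.Nodup)
    (h : ∀ a ∈ t.leaves, ∀ b ∈ t.leaves, a ≠ b → P a b = Q a b) (i : Fin N) :
    wd P t i = wd Q t i := by
  induction t generalizing i with
  | leaf a => rfl
  | node L R ihL ihR =>
    simp only [BT.leaves, List.nodup_append, List.mem_append] at hnd h
    obtain ⟨hndL, hndR, hLR⟩ := hnd
    have eL := ihL hndL fun a ha b hb => h a (.inl ha) b (.inl hb)
    have eR := ihR hndR fun a ha b hb => h a (.inr ha) b (.inr hb)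
    simp only [wd, eL, eR]
    congr 1 <;> refine wd_mul_congr fun hi => sum_wd_mul_congr fun j hj => ?_
    · exact h i (.inl hi) j (.inr hj) (hLR i hi j hj)
    · exact h i (.inr hi) j (.inl hj) (hLR j hj i hi).symm

lemma wd_node_comm {n : ℕ} (L R : BT (Fin N) n) (i : Fin N) :
    wd P (.node L R) i = wd P (.node R L) i :=
  add_comm _ _

lemma continuous_wd {n : ℕ} (t : BT (Fin N) n) (i : Fin N) :
    Continuous fun P : Fin N → Fin N → ℝ => wd P t i := by
  induction t generalizing i with
  | leaf a => exact continuous_const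
  | node L R ihL ihR => simp only [wd]; fun_prop

end WinningDistribution

def IsAffineFun (f : ℝ → ℝ) : Prop := ∃ a b : ℝ, ∀ s, f s = a * s + b

namespace IsAffineFun

lemma const (c : ℝ) : IsAffineFun fun _ => c := ⟨0, c, fun _ => by ring⟩

lemma add {f g : ℝ → ℝ} (hf : IsAffineFun f) (hg : IsAffineFun g) :
    IsAffineFun fun s => f s + g s := by
  obtain ⟨a, b, hf⟩ := hf
  obtain ⟨c, d, hg⟩ := hg
  exact ⟨a + c, b + d, fun s => by simp only [hf, hg]; ring⟩

lemma const_mul {f : ℝ → ℝ} (c : ℝ) (hf : IsAffineFun f) : IsAffineFun fun s => c * f s := by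
  obtain ⟨a, b, hf⟩ := hf
  exact ⟨c * a, c * b, fun s => by simp only [hf]; ring⟩

lemma mul_const {f : ℝ → ℝ} (hf : IsAffineFun f) (c : ℝ) : IsAffineFun fun s => f s * c := by
  simpa only [mul_comm _ c] using hf.const_mul c

lemma sum {ι : Type*} (s : Finset ι) {f : ι → ℝ → ℝ} (hf : ∀ j ∈ s, IsAffineFun (f j)) :
    IsAffineFun fun t => ∑ j ∈ s, f j t := by
  classical
  induction s using Finset.induction_on with
  | empty => simpa using const 0
  | insert a s ha ih =>
    simp only [sum_insert ha]
    exact (hf a (mem_insert_self a s)).add (ih fun j hj => hf j (mem_insert_of_mem hj))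

lemma endpoint_le {f : ℝ → ℝ} (hf : IsAffineFun f) {lo x hi : ℝ} (hlo : lo ≤ x)
    (hhi : x ≤ hi) : f lo ≤ f x ∨ f hi ≤ f x := by
  obtain ⟨a, b, hf⟩ := hf
  simp only [hf]
  rcases le_total 0 a with ha | ha
  · exact .inl (by nlinarith)
  · exact .inr (by nlinarith)

end IsAffineFun

section UpdPair

variable {Q : Fin N → Fin N → ℝ} {k l : Fin N}

lemma updPair_apply_of_fst_ne {s : ℝ} {i : Fin N} (hk : i ≠ k) (hl : i ≠ l) (j : Fin N) :
    updPair Q k l s i j = Q i j := by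
  simp [updPair, hk, hl]

lemma updPair_apply_of_snd_ne {s : ℝ} {j : Fin N} (i : Fin N) (hk : j ≠ k) (hl : j ≠ l) :
    updPair Q k l s i j = Q i j := by
  simp [updPair, hk, hl]

lemma updPair_self (hQ : Q k l + Q l k = 1) : updPair Q k l (Q k l) = Q := by
  funext i j
  unfold updPair
  split_ifs with h₁ h₂
  · rw [h₁.1, h₁.2]
  · rw [h₂.1, h₂.2]; linarith
  · rfl

lemma isAffineFun_updPair_apply (Q : Fin N → Fin N → ℝ) (k l i j : Fin N) :
    IsAffineFun fun s => updPair Q k l s i j := by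
  unfold updPair
  split_ifs
  · exact ⟨1, 0, fun s => by ring⟩
  · exact ⟨-1, 1, fun s => by ring⟩
  · exact IsAffineFun.const _

lemma wd_updPair_of_not_subset {n : ℕ} {t : BT (Fin N) n} (hnd : t.leaves.Nodup)
    (hkl : ¬(k ∈ t.leaves ∧ l ∈ t.leaves)) (s : ℝ) (i : Fin N) :
    wd (updPair Q k l s) t i = wd Q t i := by
  refine wd_congr hnd (fun a ha b hb _ => ?_) i
  unfold updPair
  split_ifs with h₁ h₂
  · exact absurd ⟨h₁.1 ▸ ha, h₁.2 ▸ hb⟩ hkl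
  · exact absurd ⟨h₂.2 ▸ hb, h₂.1 ▸ ha⟩ hkl
  · rfl

lemma isAffineFun_wd_updPair_node_of_mem_left {n : ℕ} {L R : BT (Fin N) n}
    (hnd : (BT.node L R).leaves.Nodup) (hk : k ∈ L.leaves) (hl : l ∈ L.leaves)
    (ihL : ∀ i, IsAffineFun fun s => wd (updPair Q k l s) L i) (i : Fin N) :
    IsAffineFun fun s => wd (updPair Q k l s) (.node L R) i := by
  simp only [BT.leaves, List.nodup_append] at hnd
  obtain ⟨-, hndR, hLR⟩ := hnd
  have hkR : k ∉ R.leaves := fun h => hLR k hk k h rfl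
  have hlR : l ∉ R.leaves := fun h => hLR l hl l h rfl
  have hR s := wd_updPair_of_not_subset (Q := Q) (l := l) hndR (fun h => hkR h.1) s
  have e : (fun s => wd (updPair Q k l s) (.node L R) i) = fun s =>
      wd (updPair Q k l s) L i * (∑ j, wd Q R j * Q i j) +
        wd Q R i * ∑ j, wd (updPair Q k l s) L j * Q i j := by
    funext s
    simp only [wd, hR]
    congr 1
    · exact congrArg _ <| sum_wd_mul_congr fun j hj =>
        updPair_apply_of_snd_ne i (ne_of_mem_of_not_mem hj hkR) (ne_of_mem_of_not_mem hj hlR)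
    · exact wd_mul_congr fun hi => sum_congr rfl fun j _ => by
        rw [updPair_apply_of_fst_ne (ne_of_mem_of_not_mem hi hkR) (ne_of_mem_of_not_mem hi hlR)]
  rw [e]
  exact ((ihL i).mul_const _).add
    ((IsAffineFun.sum univ fun j _ => (ihL j).mul_const (Q i j)).const_mul (wd Q R i))

lemma isAffineFun_wd_updPair {n : ℕ} {t : BT (Fin N) n} (hnd : t.leaves.Nodup) (i : Fin N) :
    IsAffineFun fun s => wd (updPair Q k l s) t i := by
  induction t generalizing i with
  | leaf a => exact IsAffineFun.const _
  | node L R ihL ihR =>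
    obtain ⟨hndL, hndR, -⟩ := List.nodup_append.1 hnd
    by_cases hL : k ∈ L.leaves ∧ l ∈ L.leaves
    · exact isAffineFun_wd_updPair_node_of_mem_left hnd hL.1 hL.2 (ihL hndL) i
    by_cases hR : k ∈ R.leaves ∧ l ∈ R.leaves
    · simp only [wd_node_comm L R]
      exact isAffineFun_wd_updPair_node_of_mem_left (L := R) (R := L)
        (List.perm_append_comm.nodup_iff.mp hnd) hR.1 hR.2 (ihR hndR) i
    have e : (fun s => wd (updPair Q k l s) (.node L R) i) = fun s =>
        wd Q L i * (∑ j, wd Q R j * updPair Q k l s i j) +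
          wd Q R i * ∑ j, wd Q L j * updPair Q k l s i j := by
      simp only [wd, wd_updPair_of_not_subset hndL hL, wd_updPair_of_not_subset hndR hR]
    rw [e]
    exact ((IsAffineFun.sum univ fun j _ => (isAffineFun_updPair_apply Q k l i j).const_mul _)
      |>.const_mul _).add <|
      (IsAffineFun.sum univ fun j _ => (isAffineFun_updPair_apply Q k l i j).const_mul _).const_mul _

end UpdPair

section Perturbation

variable {P Q : Fin N → Fin N → ℝ} {ε : ℝ}

lemma updPair_mem_perturbs (hP : IsCompMatrix P) (hQ : Q ∈ perturbs P ε) {k l : Fin N} {s : ℝ}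
    (hs₀ : 0 ≤ s) (hs₁ : s ≤ 1) (hsε : |s - P k l| ≤ ε) : updPair Q k l s ∈ perturbs P ε := by
  obtain ⟨hQc, hQε⟩ := hQ
  refine ⟨fun i j hij => ?_, fun i j hij => ?_⟩
  · unfold updPair
    split_ifs <;> grind [hQc i j hij]
  · unfold updPair
    split_ifs with h₁ h₂
    · rwa [h₁.1, h₁.2]
    · obtain ⟨rfl, rfl⟩ := h₂
      rw [show P i j = 1 - P j i by linarith [(hP i j hij).2.2], ← abs_neg]
      convert hsε using 2
      ring
    · exact hQε i j hij

lemma isClosed_perturbs : IsClosed (perturbs P ε) := by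
  simp only [perturbs, IsCompMatrix, Set.ofPred_and, Set.ofPred_forall]
  refine .inter (isClosed_iInter fun i => isClosed_iInter fun j => isClosed_iInter fun _ => ?_)
    (isClosed_iInter fun i => isClosed_iInter fun j => isClosed_iInter fun _ => ?_)
  · exact (isClosed_le (by fun_prop) (by fun_prop)).inter
      ((isClosed_le (by fun_prop) (by fun_prop)).inter (isClosed_eq (by fun_prop) (by fun_prop)))
  · exact isClosed_le (by fun_prop) (by fun_prop)

lemma exists_isMinOn_wd (hP : IsCompMatrix P) (hε : 0 ≤ ε) {n : ℕ} {t : BT (Fin N) n}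
    (hnd : t.leaves.Nodup) (i : Fin N) :
    ∃ Q ∈ perturbs P ε, IsMinOn (fun Q => wd Q t i) (perturbs P ε) Q := by
  set K := perturbs P ε ∩ ⋂ a, {Q | Q a a = P a a}
  have hPK : P ∈ K := ⟨⟨hP, fun a b _ => by simpa using hε⟩, Set.mem_iInter.2 fun _ => rfl⟩
  have hK : IsCompact K := by
    refine .of_isClosed_subset (isCompact_univ_pi fun a => isCompact_univ_pi fun b =>
      isCompact_Icc (a := P a b - ε) (b := P a b + ε))
      (isClosed_perturbs.inter (isClosed_iInter fun a => isClosed_eq (by fun_prop) (by fun_prop)))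
      fun Q ⟨⟨_, hQε⟩, hQd⟩ => Set.mem_univ_pi.2 fun a => Set.mem_univ_pi.2 fun b => ?_
    rcases eq_or_ne a b with rfl | hab
    · have : Q a a = P a a := Set.mem_iInter.1 hQd a
      constructor <;> linarith
    · have := abs_sub_le_iff.1 (hQε a b hab)
      constructor <;> linarith
  obtain ⟨Q₀, hQ₀, hmin⟩ := hK.exists_isMinOn ⟨P, hPK⟩ (continuous_wd t i).continuousOn
  refine ⟨Q₀, hQ₀.1, fun Q hQ => ?_⟩
  set Q' : Fin N → Fin N → ℝ := fun a b => if a = b then P a b else Q a b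
  have hQ'K : Q' ∈ K := ⟨⟨fun a b hab => by simpa [Q', hab, Ne.symm hab] using hQ.1 a b hab,
    fun a b hab => by simpa [Q', hab] using hQ.2 a b hab⟩, Set.mem_iInter.2 fun a => by simp [Q']⟩
  have : wd Q' t i = wd Q t i := wd_congr hnd (fun a _ b _ hab => by simp [Q', hab]) i
  exact show wd Q₀ t i ≤ wd Q t i from this ▸ hmin hQ'K

lemma wpe_eq_of_isMinOn {n : ℕ} {t : BT (Fin N) n} {i : Fin N} (hQ : Q ∈ perturbs P ε)
    (hmin : IsMinOn (fun Q => wd Q t i) (perturbs P ε) Q) : wpe i P ε t = wd Q t i :=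
  IsLeast.csInf_eq ⟨Set.mem_image_of_mem _ hQ, Set.forall_mem_image.2 hmin⟩

end Perturbation

def OnBoundary (ε : ℝ) (P Q : Fin N → Fin N → ℝ) (i j : Fin N) : Prop :=
  |Q i j - P i j| = ε ∨ Q i j = 0 ∨ Q i j = 1

section Boundary

variable {P Q : Fin N → Fin N → ℝ} {ε : ℝ}

lemma OnBoundary.symm (hP : IsCompMatrix P) (hQ : IsCompMatrix Q) {i j : Fin N} (hij : i ≠ j)
    (h : OnBoundary ε P Q i j) : OnBoundary ε P Q j i := by
  have hPji : P j i = 1 - P i j := by linarith [(hP i j hij).2.2]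
  have hQji : Q j i = 1 - Q i j := by linarith [(hQ i j hij).2.2]
  unfold OnBoundary at h ⊢
  rw [hPji, hQji, show 1 - Q i j - (1 - P i j) = -(Q i j - P i j) by ring, abs_neg]
  grind

lemma exists_isMinOn_updPair_onBoundary (hP : IsCompMatrix P) {n : ℕ} {t : BT (Fin N) n}
    (hnd : t.leaves.Nodup) {i : Fin N} (hQ : Q ∈ perturbs P ε)
    (hmin : IsMinOn (fun Q => wd Q t i) (perturbs P ε) Q) {k l : Fin N} (hkl : k ≠ l) :
    ∃ s, updPair Q k l s ∈ perturbs P ε ∧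
      IsMinOn (fun Q => wd Q t i) (perturbs P ε) (updPair Q k l s) ∧
      OnBoundary ε P (updPair Q k l s) k l := by
  have hε : 0 ≤ ε := (abs_nonneg _).trans (hQ.2 k l hkl)
  set g := fun s => wd (updPair Q k l s) t i
  set lo := max 0 (P k l - ε)
  set hi := min 1 (P k l + ε)
  have hQkl := abs_sub_le_iff.1 (hQ.2 k l hkl)
  have hlo : lo ≤ Q k l := max_le (hQ.1 k l hkl).1 (by linarith)
  have hhi : Q k l ≤ hi := le_min (hQ.1 k l hkl).2.1 (by linarith)
  obtain ⟨s, hgs, hlos, hshi, hs⟩ : ∃ s, g s ≤ g (Q k l) ∧ lo ≤ s ∧ s ≤ hi ∧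
      (|s - P k l| = ε ∨ s = 0 ∨ s = 1) := by
    rcases (isAffineFun_wd_updPair hnd i).endpoint_le hlo hhi with h | h
    · refine ⟨lo, h, le_rfl, hlo.trans hhi, ?_⟩
      rcases max_choice 0 (P k l - ε) with h | h <;> simp [lo, h, abs_of_nonneg hε]
    · refine ⟨hi, h, hlo.trans hhi, le_rfl, ?_⟩
      rcases min_choice 1 (P k l + ε) with h | h <;> simp [hi, h, abs_of_nonneg hε]
  have hupd : updPair Q k l s ∈ perturbs P ε := updPair_mem_perturbs hP hQ
    (le_trans (le_max_left _ _) hlos) (hshi.trans (min_le_left _ _))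
    (abs_sub_le_iff.2 ⟨by linarith [min_le_right 1 (P k l + ε)],
      by linarith [le_max_right 0 (P k l - ε)]⟩)
  refine ⟨s, hupd, fun R hR => ?_, by simpa [OnBoundary, updPair] using hs⟩
  calc g s ≤ g (Q k l) := hgs
    _ = wd Q t i := by simp only [g, updPair_self (hQ.1 k l hkl).2.2]
    _ ≤ wd R t i := hmin hR

lemma exists_isMinOn_wd_onBoundary (hP : IsCompMatrix P) (hε : 0 ≤ ε) {n : ℕ}
    {t : BT (Fin N) n} (hnd : t.leaves.Nodup) (i : Fin N) :
    ∃ Q ∈ perturbs P ε, IsMinOn (fun Q => wd Q t i) (perturbs P ε) Q ∧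
      ∀ a b, a ≠ b → OnBoundary ε P Q a b := by
  classical
  suffices ∀ S : Finset (Fin N × Fin N), ∃ Q ∈ perturbs P ε,
      IsMinOn (fun Q => wd Q t i) (perturbs P ε) Q ∧
      ∀ p ∈ S, p.1 ≠ p.2 → OnBoundary ε P Q p.1 p.2 by
    obtain ⟨Q, hQ, hmin, hbd⟩ := this univ
    exact ⟨Q, hQ, hmin, fun a b hab => hbd (a, b) (mem_univ _) hab⟩
  intro S
  induction S using Finset.induction_on with
  | empty =>
    obtain ⟨Q, hQ, hmin⟩ := exists_isMinOn_wd hP hε hnd i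
    exact ⟨Q, hQ, hmin, by simp⟩
  | insert p S _ ih =>
    obtain ⟨Q, hQ, hmin, hbd⟩ := ih
    obtain ⟨k, l⟩ := p
    rcases eq_or_ne k l with rfl | hkl
    · exact ⟨Q, hQ, hmin, by simpa using hbd⟩
    obtain ⟨s, hQ', hmin', hkl'⟩ := exists_isMinOn_updPair_onBoundary hP hnd hQ hmin hkl
    refine ⟨_, hQ', hmin', ?_⟩
    rintro ⟨a, b⟩ hab hne
    by_cases h₁ : a = k ∧ b = l
    · obtain ⟨rfl, rfl⟩ := h₁; exact hkl'
    by_cases h₂ : a = l ∧ b = k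
    · obtain ⟨rfl, rfl⟩ := h₂; exact hkl'.symm hP hQ'.1 hkl
    have hS : (a, b) ∈ S := by simpa [h₁] using hab
    simpa [OnBoundary, updPair, h₁, h₂] using hbd _ hS hne

end Boundary

/-- the infimum defining `wp_ε` is attained by a perturbation each of
whose entries either differs from the original by exactly `ε` or lies in `{0,1}`. -/
theorem wpe_attained_on_boundary (n : ℕ)
    (P : Fin (2 ^ n) → Fin (2 ^ n) → ℝ) (hP : IsCompMatrix P)
    (σ : BT (Fin (2 ^ n)) n) (hσ : IsDraw σ)
    (istar : Fin (2 ^ n)) (ε : ℝ) (hε : 0 < ε) :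
    ∃ P' ∈ perturbs P ε, wd P' σ istar = wpe istar P ε σ ∧
      ∀ i j : Fin (2 ^ n), i ≠ j →
        |P' i j - P i j| = ε ∨ P' i j = 0 ∨ P' i j = 1 := by
  have hnd : σ.leaves.Nodup := List.nodup_iff_count_le_one.2 fun a => (hσ a).le
  obtain ⟨P', hP', hmin, hbd⟩ := exists_isMinOn_wd_onBoundary hP hε.le hnd istar
  exact ⟨P', hP', (wpe_eq_of_isMinOn hP' hmin).symm, hbd⟩
end

section
/- Let P be a deterministic comparison matrix for N = 2^n players, σ a draw, and i* a player with wp(i*,P,σ) = 1, and let c be the number of crucial pairs. Then the ε-worst drop is c·ε to first order: lim_{ε → 0+} (1 − wp_ε(i*,P,σ)) / ε = c. -/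
namespace P17

variable {N : ℕ}

/-- Each player occurs at most once among the leaves. -/
def Uniq {n : ℕ} (t : BT (Fin N) n) : Prop := ∀ i, t.leaves.count i ≤ 1

lemma Uniq.left {n : ℕ} {L R : BT (Fin N) n} (h : Uniq (BT.node L R)) : Uniq L := by
  intro i
  have := h i
  simp [BT.leaves, List.count_append] at this
  omega

lemma Uniq.right {n : ℕ} {L R : BT (Fin N) n} (h : Uniq (BT.node L R)) : Uniq R := by
  intro i
  have := h i
  simp [BT.leaves, List.count_append] at this
  omega

lemma Uniq.disj {n : ℕ} {L R : BT (Fin N) n} (h : Uniq (BT.node L R)) {i : Fin N}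
    (hi : i ∈ L.leaves) : i ∉ R.leaves := by
  intro hir
  have := h i
  have h1 : 1 ≤ L.leaves.count i := List.count_pos_iff.2 hi
  have h2 : 1 ≤ R.leaves.count i := List.count_pos_iff.2 hir
  simp [BT.leaves, List.count_append] at this
  omega

lemma wd_eq_zero {Q : Fin N → Fin N → ℝ} :
    ∀ {n : ℕ} (t : BT (Fin N) n) (i : Fin N), i ∉ t.leaves → wd Q t i = 0 := by
  intro n t
  induction t with
  | leaf a =>
      intro i hi
      simp [BT.leaves] at hi
      simp [wd, hi]
  | node L R ihL ihR =>
      intro i hi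
      simp [BT.leaves] at hi
      simp [wd, ihL i hi.1, ihR i hi.2]

/-- wd only depends on off-diagonal entries (under Uniq). -/
lemma wd_offdiag_congr {Q1 Q2 : Fin N → Fin N → ℝ}
    (hQ : ∀ i j : Fin N, i ≠ j → Q1 i j = Q2 i j) :
    ∀ {n : ℕ} (t : BT (Fin N) n), Uniq t → ∀ i, wd Q1 t i = wd Q2 t i := by
  intro n t
  induction t with
  | leaf a => intro _ i; simp [wd]
  | node L R ihL ihR =>
      intro ht i
      have hL := ihL ht.left
      have hR := ihR ht.right
      simp only [wd, hL, hR]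
      congr 1
      · by_cases hiL : i ∈ L.leaves
        · have hiR : i ∉ R.leaves := ht.disj hiL
          congr 1
          apply Finset.sum_congr rfl
          intro j _
          by_cases hji : j = i
          · subst hji; rw [wd_eq_zero R j hiR]; ring
          · rw [hQ i j (fun h => hji h.symm)]
        · rw [wd_eq_zero L i hiL]; ring
      · by_cases hiR : i ∈ R.leaves
        · have hiL : i ∉ L.leaves := fun h => (ht.disj h) hiR
          congr 1
          apply Finset.sum_congr rfl
          intro j _
          by_cases hji : j = i
          · subst hji; rw [wd_eq_zero L j hiL]; ring
          · rw [hQ i j (fun h => hji h.symm)]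
        · rw [wd_eq_zero R i hiR]; ring

/-- A fully in-[0,1] matrix with off-diagonal sums 1. -/
def Good (Q : Fin N → Fin N → ℝ) : Prop :=
  (∀ i j, 0 ≤ Q i j ∧ Q i j ≤ 1) ∧ ∀ i j : Fin N, i ≠ j → Q i j + Q j i = 1

lemma wd_nonneg {Q : Fin N → Fin N → ℝ} (hQ : ∀ i j, 0 ≤ Q i j ∧ Q i j ≤ 1) :
    ∀ {n : ℕ} (t : BT (Fin N) n) (i : Fin N), 0 ≤ wd Q t i := by
  intro n t
  induction t with
  | leaf a => intro i; simp [wd]; positivity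
  | node L R ihL ihR =>
      intro i
      have s1 : 0 ≤ ∑ j, wd Q R j * Q i j :=
        Finset.sum_nonneg fun j _ => mul_nonneg (ihR j) (hQ i j).1
      have s2 : 0 ≤ ∑ j, wd Q L j * Q i j :=
        Finset.sum_nonneg fun j _ => mul_nonneg (ihL j) (hQ i j).1
      exact add_nonneg (mul_nonneg (ihL i) s1) (mul_nonneg (ihR i) s2)

lemma wd_sum_one {Q : Fin N → Fin N → ℝ} (hQ : Good Q) :
    ∀ {n : ℕ} (t : BT (Fin N) n), Uniq t → ∑ i, wd Q t i = 1 := by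
  intro n t
  induction t with
  | leaf a => intro _; simp [wd]
  | node L R ihL ihR =>
      intro ht
      have hx : ∑ i, wd Q L i = 1 := ihL ht.left
      have hy : ∑ i, wd Q R i = 1 := ihR ht.right
      have key : ∀ i j : Fin N, wd Q L i * wd Q R j * (Q i j + Q j i)
          = wd Q L i * wd Q R j := by
        intro i j
        by_cases hij : i = j
        · subst hij
          by_cases hiL : i ∈ L.leaves
          · rw [wd_eq_zero R i (ht.disj hiL)]; ring
          · rw [wd_eq_zero L i hiL]; ring
        · rw [hQ.2 i j hij]; ring
      simp only [wd]
      rw [Finset.sum_add_distrib]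
      have e1 : ∑ i, wd Q L i * ∑ j, wd Q R j * Q i j
          = ∑ i, ∑ j, wd Q L i * wd Q R j * Q i j := by
        apply Finset.sum_congr rfl; intro i _
        rw [Finset.mul_sum]; apply Finset.sum_congr rfl; intro j _; ring
      have e2 : ∑ i, wd Q R i * ∑ j, wd Q L j * Q i j
          = ∑ i, ∑ j, wd Q L j * wd Q R i * Q i j := by
        apply Finset.sum_congr rfl; intro i _
        rw [Finset.mul_sum]; apply Finset.sum_congr rfl; intro j _; ring
      have step : ∑ i, ∑ j, wd Q L j * wd Q R i * Q i j
          = ∑ i, ∑ j, wd Q L i * wd Q R j * Q j i := Finset.sum_comm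
      rw [e1, e2, step, ← Finset.sum_add_distrib]
      have step2 : ∀ i : Fin N,
          ((∑ j, wd Q L i * wd Q R j * Q i j) + ∑ j, wd Q L i * wd Q R j * Q j i)
          = ∑ j, wd Q L i * wd Q R j := by
        intro i
        rw [← Finset.sum_add_distrib]
        apply Finset.sum_congr rfl; intro j _
        have := key i j
        linarith [key i j]
      calc (∑ i, ((∑ j, wd Q L i * wd Q R j * Q i j) + ∑ j, wd Q L i * wd Q R j * Q j i))
          = ∑ i, ∑ j, wd Q L i * wd Q R j := Finset.sum_congr rfl (fun i _ => step2 i)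
        _ = 1 := by
            simp only [← Finset.mul_sum, hy, mul_one]
            exact hx

end P17

namespace P17

variable {N : ℕ}

lemma wd_le_one {Q : Fin N → Fin N → ℝ} (hQ : Good Q) {n : ℕ} {t : BT (Fin N) n}
    (ht : Uniq t) (i : Fin N) : wd Q t i ≤ 1 := by
  have h := wd_sum_one hQ t ht
  have : wd Q t i ≤ ∑ j, wd Q t j :=
    Finset.single_le_sum (fun j _ => wd_nonneg hQ.1 t j) (Finset.mem_univ i)
  linarith

def Cst : ℕ → ℝ
  | 0 => 0
  | n + 1 => 4 * Cst n + 2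

lemma Cst_nonneg (n : ℕ) : 0 ≤ Cst n := by
  induction n with
  | zero => simp [Cst]
  | succ n ih => simp only [Cst]; linarith

lemma wd_lip {δ : ℝ} (hδ : 0 ≤ δ) :
    ∀ {n : ℕ} (t : BT (Fin N) n), Uniq t →
    ∀ Q1 Q2 : Fin N → Fin N → ℝ, Good Q1 → Good Q2 →
    (∀ i j, |Q1 i j - Q2 i j| ≤ δ) →
    ∑ i, |wd Q1 t i - wd Q2 t i| ≤ Cst n * δ := by
  intro n t
  induction t with
  | leaf a => intro _ Q1 Q2 _ _ _; simp [wd, Cst]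
  | node L R ihL ihR =>
      intro ht Q1 Q2 h1 h2 hd
      have hDL := ihL ht.left Q1 Q2 h1 h2 hd
      have hDR := ihR ht.right Q1 Q2 h1 h2 hd
      set DL := ∑ i, |wd Q1 L i - wd Q2 L i| with hDLdef
      set DR := ∑ i, |wd Q1 R i - wd Q2 R i| with hDRdef
      have hDLnn : 0 ≤ DL := Finset.sum_nonneg fun i _ => abs_nonneg _
      have hDRnn : 0 ≤ DR := Finset.sum_nonneg fun i _ => abs_nonneg _
      -- generic inner-sum difference bound
      have hsd : ∀ {m : ℕ} (A : BT (Fin N) m), Uniq A →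
          ∀ i, |(∑ j, wd Q1 A j * Q1 i j) - ∑ j, wd Q2 A j * Q2 i j|
            ≤ (∑ j, |wd Q1 A j - wd Q2 A j|) + δ := by
        intro m A hA i
        rw [← Finset.sum_sub_distrib]
        refine le_trans (Finset.abs_sum_le_sum_abs _ _) ?_
        have hterm : ∀ j ∈ Finset.univ (α := Fin N),
            |wd Q1 A j * Q1 i j - wd Q2 A j * Q2 i j|
            ≤ |wd Q1 A j - wd Q2 A j| + wd Q2 A j * δ := by
          intro j _
          have e : wd Q1 A j * Q1 i j - wd Q2 A j * Q2 i j
              = (wd Q1 A j - wd Q2 A j) * Q1 i j + wd Q2 A j * (Q1 i j - Q2 i j) := by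
            ring
          rw [e]
          refine le_trans (abs_add_le _ _) ?_
          rw [abs_mul, abs_mul]
          have b1 : |Q1 i j| ≤ 1 := abs_le.2 ⟨by linarith [(h1.1 i j).1], (h1.1 i j).2⟩
          have b2 : |wd Q2 A j| = wd Q2 A j := abs_of_nonneg (wd_nonneg h2.1 A j)
          have b3 : |Q1 i j - Q2 i j| ≤ δ := hd i j
          have b4 : 0 ≤ wd Q2 A j := wd_nonneg h2.1 A j
          have g1 : |wd Q1 A j - wd Q2 A j| * |Q1 i j| ≤ |wd Q1 A j - wd Q2 A j| * 1 :=
            mul_le_mul_of_nonneg_left b1 (abs_nonneg _)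
          have g2 : wd Q2 A j * |Q1 i j - Q2 i j| ≤ wd Q2 A j * δ :=
            mul_le_mul_of_nonneg_left b3 b4
          rw [b2]; linarith
        refine le_trans (Finset.sum_le_sum hterm) ?_
        rw [Finset.sum_add_distrib, ← Finset.sum_mul, wd_sum_one h2 A hA, one_mul]
      -- inner sums are in [0,1]
      have hsb : ∀ {m : ℕ} (A : BT (Fin N) m), Uniq A →
          ∀ i, |∑ j, wd Q1 A j * Q1 i j| ≤ 1 := by
        intro m A hA i
        have h0 : 0 ≤ ∑ j, wd Q1 A j * Q1 i j :=
          Finset.sum_nonneg fun j _ => mul_nonneg (wd_nonneg h1.1 A j) ((h1.1 i j).1)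
        have hle : ∑ j, wd Q1 A j * Q1 i j ≤ ∑ j, wd Q1 A j := by
          refine Finset.sum_le_sum fun j _ => ?_
          have := (h1.1 i j).2
          nlinarith [wd_nonneg h1.1 A j]
        rw [wd_sum_one h1 A hA] at hle
        exact abs_le.2 ⟨by linarith, hle⟩
      have main : ∀ i, |wd Q1 (BT.node L R) i - wd Q2 (BT.node L R) i|
          ≤ (|wd Q1 L i - wd Q2 L i| + wd Q2 L i * (DR + δ))
            + (|wd Q1 R i - wd Q2 R i| + wd Q2 R i * (DL + δ)) := by
        intro i
        simp only [wd]
        have e : (wd Q1 L i * (∑ j, wd Q1 R j * Q1 i j) + wd Q1 R i * ∑ j, wd Q1 L j * Q1 i j)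
            - (wd Q2 L i * (∑ j, wd Q2 R j * Q2 i j) + wd Q2 R i * ∑ j, wd Q2 L j * Q2 i j)
            = ((wd Q1 L i - wd Q2 L i) * (∑ j, wd Q1 R j * Q1 i j)
                + wd Q2 L i * ((∑ j, wd Q1 R j * Q1 i j) - ∑ j, wd Q2 R j * Q2 i j))
              + ((wd Q1 R i - wd Q2 R i) * (∑ j, wd Q1 L j * Q1 i j)
                + wd Q2 R i * ((∑ j, wd Q1 L j * Q1 i j) - ∑ j, wd Q2 L j * Q2 i j)) := by
          ring
        rw [e]
        refine le_trans (abs_add_le _ _) ?_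
        have bL := hsd L ht.left i
        have bR := hsd R ht.right i
        have sbL := hsb L ht.left i
        have sbR := hsb R ht.right i
        have nnL : 0 ≤ wd Q2 L i := wd_nonneg h2.1 L i
        have nnR : 0 ≤ wd Q2 R i := wd_nonneg h2.1 R i
        have t1 : |(wd Q1 L i - wd Q2 L i) * (∑ j, wd Q1 R j * Q1 i j)
            + wd Q2 L i * ((∑ j, wd Q1 R j * Q1 i j) - ∑ j, wd Q2 R j * Q2 i j)|
            ≤ |wd Q1 L i - wd Q2 L i| + wd Q2 L i * (DR + δ) := by
          refine le_trans (abs_add_le _ _) ?_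
          rw [abs_mul, abs_mul, abs_of_nonneg nnL]
          have g1 : |wd Q1 L i - wd Q2 L i| * |∑ j, wd Q1 R j * Q1 i j|
              ≤ |wd Q1 L i - wd Q2 L i| * 1 := mul_le_mul_of_nonneg_left sbR (abs_nonneg _)
          have g2 : wd Q2 L i * |(∑ j, wd Q1 R j * Q1 i j) - ∑ j, wd Q2 R j * Q2 i j|
              ≤ wd Q2 L i * (DR + δ) := mul_le_mul_of_nonneg_left bR nnL
          linarith
        have t2 : |(wd Q1 R i - wd Q2 R i) * (∑ j, wd Q1 L j * Q1 i j)
            + wd Q2 R i * ((∑ j, wd Q1 L j * Q1 i j) - ∑ j, wd Q2 L j * Q2 i j)|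
            ≤ |wd Q1 R i - wd Q2 R i| + wd Q2 R i * (DL + δ) := by
          refine le_trans (abs_add_le _ _) ?_
          rw [abs_mul, abs_mul, abs_of_nonneg nnR]
          have g1 : |wd Q1 R i - wd Q2 R i| * |∑ j, wd Q1 L j * Q1 i j|
              ≤ |wd Q1 R i - wd Q2 R i| * 1 := mul_le_mul_of_nonneg_left sbL (abs_nonneg _)
          have g2 : wd Q2 R i * |(∑ j, wd Q1 L j * Q1 i j) - ∑ j, wd Q2 L j * Q2 i j|
              ≤ wd Q2 R i * (DL + δ) := mul_le_mul_of_nonneg_left bL nnR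
          linarith
        linarith
      refine le_trans (Finset.sum_le_sum fun i _ => main i) ?_
      rw [Finset.sum_add_distrib, Finset.sum_add_distrib, Finset.sum_add_distrib,
        ← Finset.sum_mul, ← Finset.sum_mul, wd_sum_one h2 L ht.left,
        wd_sum_one h2 R ht.right, one_mul, one_mul]
      simp only [Cst]
      linarith

lemma wd_lip_single {δ : ℝ} (hδ : 0 ≤ δ) {n : ℕ} (t : BT (Fin N) n) (ht : Uniq t)
    (Q1 Q2 : Fin N → Fin N → ℝ) (h1 : Good Q1) (h2 : Good Q2)
    (hd : ∀ i j, |Q1 i j - Q2 i j| ≤ δ) (i : Fin N) :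
    |wd Q1 t i - wd Q2 t i| ≤ Cst n * δ := by
  refine le_trans ?_ (wd_lip hδ t ht Q1 Q2 h1 h2 hd)
  exact Finset.single_le_sum (f := fun i => |wd Q1 t i - wd Q2 t i|)
    (fun j _ => abs_nonneg _) (Finset.mem_univ i)

end P17

namespace P17

variable {N : ℕ}

lemma updPair_comm {Q : Fin N → Fin N → ℝ} {a b : Fin N} (hab : a ≠ b) (s : ℝ) :
    updPair Q a b s = updPair Q b a (1 - s) := by
  funext i j
  simp only [updPair]
  by_cases h1 : i = a ∧ j = b
  · have h2 : ¬ (i = b ∧ j = a) := by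
      rintro ⟨rfl, rfl⟩; exact hab (h1.2 ▸ h1.1.symm)
    rw [if_pos h1, if_neg h2, if_pos h1]; ring
  · by_cases h2 : i = b ∧ j = a
    · rw [if_neg h1, if_pos h2, if_pos h2]
    · rw [if_neg h1, if_neg h2, if_neg h2, if_neg h1]

lemma updPair_entry_affine {Q : Fin N → Fin N → ℝ} {a b : Fin N} (s : ℝ) (i j : Fin N) :
    updPair Q a b s i j = (1 - s) * updPair Q a b 0 i j + s * updPair Q a b 1 i j := by
  simp only [updPair]
  split_ifs <;> ring

lemma wd_updPair_outside {Q : Fin N → Fin N → ℝ} {a b : Fin N} :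
    ∀ {n : ℕ} (t : BT (Fin N) n), a ∉ t.leaves → ∀ (s : ℝ) (i : Fin N),
      wd (updPair Q a b s) t i = wd Q t i := by
  intro n t
  induction t with
  | leaf c => intro _ s i; simp [wd]
  | node L R ihL ihR =>
      intro ha s i
      simp only [BT.leaves, List.mem_append] at ha
      push_neg at ha
      have hL := ihL ha.1 s
      have hR := ihR ha.2 s
      simp only [wd]
      rw [hL i, hR i]
      congr 1
      · by_cases hia : i = a
        · subst hia; rw [wd_eq_zero L i ha.1]; ring
        · congr 1
          apply Finset.sum_congr rfl
          intro j _
          by_cases hja : j = a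
          · subst hja; rw [hR j, wd_eq_zero R j ha.2]; ring
          · rw [hR j]
            have : updPair Q a b s i j = Q i j := by
              simp only [updPair]
              rw [if_neg (by tauto), if_neg (by tauto)]
            rw [this]
      · by_cases hia : i = a
        · subst hia; rw [wd_eq_zero R i ha.2]; ring
        · congr 1
          apply Finset.sum_congr rfl
          intro j _
          by_cases hja : j = a
          · subst hja; rw [hL j, wd_eq_zero L j ha.1]; ring
          · rw [hL j]
            have : updPair Q a b s i j = Q i j := by
              simp only [updPair]
              rw [if_neg (by tauto), if_neg (by tauto)]
            rw [this]

lemma wd_updPair_outside₂ {Q : Fin N → Fin N → ℝ} {a b : Fin N} (hab : a ≠ b)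
    {n : ℕ} (t : BT (Fin N) n) (hb : b ∉ t.leaves) (s : ℝ) (i : Fin N) :
    wd (updPair Q a b s) t i = wd Q t i := by
  rw [updPair_comm hab]
  exact wd_updPair_outside t hb (1 - s) i

lemma wd_node_comm (Q : Fin N → Fin N → ℝ) {m : ℕ} (L R : BT (Fin N) m) (i : Fin N) :
    wd Q (BT.node L R) i = wd Q (BT.node R L) i := by
  simp only [wd]; ring

lemma Uniq.comm {m : ℕ} {L R : BT (Fin N) m} (h : Uniq (BT.node L R)) :
    Uniq (BT.node R L) := by
  intro i
  have := h i
  simp only [BT.leaves, List.count_append] at *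
  omega

end P17

namespace P17

variable {N : ℕ}

lemma aff_node_left {m : ℕ} {L R : BT (Fin N) m} {Q : Fin N → Fin N → ℝ}
    {a b : Fin N} (hab : a ≠ b) (hu : Uniq (BT.node L R))
    (haL : a ∈ L.leaves) (hbL : b ∈ L.leaves)
    (ih : ∀ (s : ℝ) (i : Fin N), wd (updPair Q a b s) L i
        = (1 - s) * wd (updPair Q a b 0) L i + s * wd (updPair Q a b 1) L i)
    (s : ℝ) (i : Fin N) :
    wd (updPair Q a b s) (BT.node L R) i
      = (1 - s) * wd (updPair Q a b 0) (BT.node L R) i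
        + s * wd (updPair Q a b 1) (BT.node L R) i := by
  have haR : a ∉ R.leaves := hu.disj haL
  have hbR : b ∉ R.leaves := hu.disj hbL
  have hRc : ∀ (s' : ℝ) (j : Fin N), wd (updPair Q a b s') R j = wd Q R j :=
    fun s' j => wd_updPair_outside R haR s' j
  have expand : ∀ (s' : ℝ), wd (updPair Q a b s') (BT.node L R) i
      = wd (updPair Q a b s') L i * (∑ j, wd Q R j * Q i j)
        + wd Q R i * ∑ j, wd (updPair Q a b s') L j * Q i j := by
    intro s'
    simp only [wd]
    rw [hRc s' i]
    congr 1
    · congr 1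
      apply Finset.sum_congr rfl
      intro j _
      rw [hRc s' j]
      by_cases hja : j = a
      · subst hja; rw [wd_eq_zero R j haR]; ring
      · by_cases hjb : j = b
        · subst hjb; rw [wd_eq_zero R j hbR]; ring
        · have : updPair Q a b s' i j = Q i j := by
            simp only [updPair]; rw [if_neg (by tauto), if_neg (by tauto)]
          rw [this]
    · by_cases hia : i = a
      · subst hia; rw [wd_eq_zero R i haR]; ring
      · by_cases hib : i = b
        · subst hib; rw [wd_eq_zero R i hbR]; ring
        · congr 1
          apply Finset.sum_congr rfl
          intro j _
          have : updPair Q a b s' i j = Q i j := by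
            simp only [updPair]; rw [if_neg (by tauto), if_neg (by tauto)]
          rw [this]
  have hsum : ∑ j, wd (updPair Q a b s) L j * Q i j
      = (1 - s) * (∑ j, wd (updPair Q a b 0) L j * Q i j)
        + s * ∑ j, wd (updPair Q a b 1) L j * Q i j := by
    rw [Finset.mul_sum, Finset.mul_sum, ← Finset.sum_add_distrib]
    apply Finset.sum_congr rfl
    intro j _
    rw [ih s j]; ring
  rw [expand s, expand 0, expand 1, ih s i, hsum]
  ring

lemma aff_node_mixed {m : ℕ} {L R : BT (Fin N) m} {Q : Fin N → Fin N → ℝ}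
    {a b : Fin N} (hab : a ≠ b)
    (haR : a ∉ R.leaves) (hbL : b ∉ L.leaves)
    (s : ℝ) (i : Fin N) :
    wd (updPair Q a b s) (BT.node L R) i
      = (1 - s) * wd (updPair Q a b 0) (BT.node L R) i
        + s * wd (updPair Q a b 1) (BT.node L R) i := by
  have hLc : ∀ (s' : ℝ) (j : Fin N), wd (updPair Q a b s') L j = wd Q L j :=
    fun s' j => wd_updPair_outside₂ hab L hbL s' j
  have hRc : ∀ (s' : ℝ) (j : Fin N), wd (updPair Q a b s') R j = wd Q R j :=
    fun s' j => wd_updPair_outside R haR s' j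
  have expand : ∀ (s' : ℝ), wd (updPair Q a b s') (BT.node L R) i
      = wd Q L i * (∑ j, wd Q R j * updPair Q a b s' i j)
        + wd Q R i * ∑ j, wd Q L j * updPair Q a b s' i j := by
    intro s'
    simp only [wd, hLc s', hRc s']
  have e1 : ∑ j, wd Q R j * updPair Q a b s i j
      = (1 - s) * (∑ j, wd Q R j * updPair Q a b 0 i j)
        + s * ∑ j, wd Q R j * updPair Q a b 1 i j := by
    rw [Finset.mul_sum, Finset.mul_sum, ← Finset.sum_add_distrib]
    apply Finset.sum_congr rfl
    intro j _
    rw [updPair_entry_affine s i j]; ring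
  have e2 : ∑ j, wd Q L j * updPair Q a b s i j
      = (1 - s) * (∑ j, wd Q L j * updPair Q a b 0 i j)
        + s * ∑ j, wd Q L j * updPair Q a b 1 i j := by
    rw [Finset.mul_sum, Finset.mul_sum, ← Finset.sum_add_distrib]
    apply Finset.sum_congr rfl
    intro j _
    rw [updPair_entry_affine s i j]; ring
  rw [expand s, expand 0, expand 1, e1, e2]
  ring

lemma wd_updPair_affine {Q : Fin N → Fin N → ℝ} {a b : Fin N} (hab : a ≠ b) :
    ∀ {n : ℕ} (t : BT (Fin N) n), Uniq t → ∀ (s : ℝ) (i : Fin N),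
      wd (updPair Q a b s) t i
        = (1 - s) * wd (updPair Q a b 0) t i + s * wd (updPair Q a b 1) t i := by
  intro n t
  induction t with
  | leaf c => intro _ s i; simp only [wd]; ring
  | node L R ihL ihR =>
      intro hu s i
      by_cases ha : a ∈ (BT.node L R).leaves
      · by_cases hb : b ∈ (BT.node L R).leaves
        · simp only [BT.leaves, List.mem_append] at ha hb
          rcases ha with haL | haR <;> rcases hb with hbL | hbR
          · exact aff_node_left hab hu haL hbL (ihL hu.left) s i
          · exact aff_node_mixed hab (hu.disj haL) (fun h => (hu.disj h) hbR) s i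
          · rw [wd_node_comm (updPair Q a b s), wd_node_comm (updPair Q a b 0),
              wd_node_comm (updPair Q a b 1)]
            exact aff_node_mixed hab (fun h => (hu.disj h) haR) (hu.disj hbL) s i
          · rw [wd_node_comm (updPair Q a b s), wd_node_comm (updPair Q a b 0),
              wd_node_comm (updPair Q a b 1)]
            exact aff_node_left hab hu.comm haR hbR (ihR hu.right) s i
        · rw [wd_updPair_outside₂ hab _ hb, wd_updPair_outside₂ hab _ hb,
            wd_updPair_outside₂ hab _ hb]
          ring
      · rw [wd_updPair_outside _ ha, wd_updPair_outside _ ha, wd_updPair_outside _ ha]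
        ring

end P17

namespace P17

variable {N : ℕ}

lemma wd_det {Q : Fin N → Fin N → ℝ} (hQ : Good Q)
    (hdet : ∀ i j : Fin N, i ≠ j → Q i j = 0 ∨ Q i j = 1) :
    ∀ {n : ℕ} (t : BT (Fin N) n), Uniq t →
    ∃ w ∈ t.leaves, ∀ i, wd Q t i = if i = w then 1 else 0 := by
  intro n t
  induction t with
  | leaf c => intro _; exact ⟨c, by simp [BT.leaves], fun i => by simp [wd]⟩
  | node L R ihL ihR =>
      intro hu
      obtain ⟨wL, hwL, hL⟩ := ihL hu.left
      obtain ⟨wR, hwR, hR⟩ := ihR hu.right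
      have hne : wL ≠ wR := fun h => (hu.disj hwL) (h ▸ hwR)
      have hsum1 : ∀ i, (∑ j, wd Q R j * Q i j) = Q i wR := by
        intro i
        rw [Finset.sum_eq_single wR]
        · rw [hR wR, if_pos rfl, one_mul]
        · intro j _ hj; rw [hR j, if_neg hj, zero_mul]
        · intro h; exact absurd (Finset.mem_univ _) h
      have hsum2 : ∀ i, (∑ j, wd Q L j * Q i j) = Q i wL := by
        intro i
        rw [Finset.sum_eq_single wL]
        · rw [hL wL, if_pos rfl, one_mul]
        · intro j _ hj; rw [hL j, if_neg hj, zero_mul]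
        · intro h; exact absurd (Finset.mem_univ _) h
      have hw : ∀ i, wd Q (BT.node L R) i
          = (if i = wL then 1 else 0) * Q i wR + (if i = wR then 1 else 0) * Q i wL := by
        intro i
        simp only [wd]
        rw [hsum1 i, hsum2 i, hL i, hR i]
      have hsum : Q wL wR + Q wR wL = 1 := hQ.2 wL wR hne
      rcases hdet wL wR hne with h0 | h1
      · refine ⟨wR, by simp [BT.leaves, hwR], fun i => ?_⟩
        rw [hw i]
        by_cases hiR : i = wR
        · subst hiR
          rw [if_pos rfl, if_neg (fun h => hne h.symm)]
          have : Q i wL = 1 := by linarith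
          rw [this]; simp
        · rw [if_neg hiR]
          by_cases hiL : i = wL
          · subst hiL; rw [if_pos rfl, h0]; simp [if_neg hiR]
          · rw [if_neg hiL]; simp [if_neg hiR]
      · refine ⟨wL, by simp [BT.leaves, hwL], fun i => ?_⟩
        rw [hw i]
        by_cases hiL : i = wL
        · subst hiL
          rw [if_pos rfl, if_neg (fun h => hne h), h1]
          simp
        · rw [if_neg hiL]
          by_cases hiR : i = wR
          · subst hiR
            rw [if_pos rfl]
            have : Q i wL = 0 := by linarith
            rw [this]; simp [if_neg hiL]
          · rw [if_neg hiR]; simp [if_neg hiL]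

/-- Replace the diagonal by 1/2. -/
noncomputable def clean (Q : Fin N → Fin N → ℝ) : Fin N → Fin N → ℝ :=
  fun i j => if i = j then 1/2 else Q i j

lemma clean_good {Q : Fin N → Fin N → ℝ} (hQ : IsCompMatrix Q) : Good (clean Q) := by
  constructor
  · intro i j
    simp only [clean]
    split_ifs with h
    · norm_num
    · exact ⟨(hQ i j h).1, (hQ i j h).2.1⟩
  · intro i j hij
    simp only [clean, if_neg hij, if_neg (Ne.symm hij)]
    exact (hQ i j hij).2.2

lemma wd_clean {Q : Fin N → Fin N → ℝ} {n : ℕ} {t : BT (Fin N) n} (ht : Uniq t)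
    (i : Fin N) : wd (clean Q) t i = wd Q t i :=
  wd_offdiag_congr (fun i j hij => by simp [clean, if_neg hij]) t ht i

lemma Good.updPair_ {M : Fin N → Fin N → ℝ} (hM : Good M) {a b : Fin N} (hab : a ≠ b)
    {s : ℝ} (h0 : 0 ≤ s) (h1 : s ≤ 1) : Good (updPair M a b s) := by
  constructor
  · intro i j
    simp only [updPair]
    split_ifs with h h'
    · exact ⟨h0, h1⟩
    · constructor <;> linarith
    · exact hM.1 i j
  · intro i j hij
    simp only [updPair]
    by_cases h1' : i = a ∧ j = b
    · obtain ⟨rfl, rfl⟩ := h1'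
      rw [if_pos ⟨rfl, rfl⟩, if_neg (fun h => hij h.2), if_pos ⟨rfl, rfl⟩]
      ring
    · by_cases h2' : i = b ∧ j = a
      · obtain ⟨rfl, rfl⟩ := h2'
        rw [if_neg h1', if_pos ⟨rfl, rfl⟩, if_pos ⟨rfl, rfl⟩]
        ring
      · rw [if_neg h1', if_neg h2', if_neg (by tauto), if_neg (by tauto)]
        exact hM.2 i j hij

lemma swapPair_comp {P : Fin N → Fin N → ℝ} (hP : IsCompMatrix P) (a b : Fin N) :
    IsCompMatrix (swapPair P a b) := by
  intro i j hij
  simp only [swapPair]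
  by_cases h1 : i = a ∧ j = b
  · obtain ⟨rfl, rfl⟩ := h1
    have hab : i ≠ j := hij
    rw [if_pos ⟨rfl, rfl⟩, if_neg (fun h : j = i ∧ i = j => hij h.2), if_pos ⟨rfl, rfl⟩]
    have := hP j i (fun h => hij h.symm)
    exact ⟨this.1, this.2.1, by linarith [this.2.2]⟩
  · by_cases h2 : i = b ∧ j = a
    · obtain ⟨rfl, rfl⟩ := h2
      rw [if_neg h1, if_pos ⟨rfl, rfl⟩, if_pos ⟨rfl, rfl⟩]
      have := hP j i (fun h => hij h.symm)
      exact ⟨this.1, this.2.1, by linarith [this.2.2]⟩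
    · rw [if_neg h1, if_neg h2, if_neg (by tauto), if_neg (by tauto)]
      exact hP i j hij

lemma swapPair_det {P : Fin N → Fin N → ℝ} (hdet : IsDet P) (a b : Fin N) :
    IsDet (swapPair P a b) := by
  intro i j hij
  simp only [swapPair]
  split_ifs with h1 h2
  · obtain ⟨rfl, rfl⟩ := h1
    exact hdet j i (fun h => hij h.symm)
  · obtain ⟨rfl, rfl⟩ := h2
    exact hdet j i (fun h => hij h.symm)
  · exact hdet i j hij

/-- `P` on pairs outside `T` (and their transposes), `P'` on pairs in `T`; diagonal 1/2. -/
noncomputable def mixP (P P' : Fin N → Fin N → ℝ) (T : Finset (Fin N × Fin N)) : Fin N → Fin N → ℝ :=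
  fun i j => if i = j then 1/2 else if (i, j) ∈ T ∨ (j, i) ∈ T then P' i j else P i j

lemma mixP_good {P P' : Fin N → Fin N → ℝ} (hP : IsCompMatrix P) (hP' : IsCompMatrix P')
    (T : Finset (Fin N × Fin N)) : Good (mixP P P' T) := by
  constructor
  · intro i j
    simp only [mixP]
    split_ifs with h h'
    · norm_num
    · exact ⟨(hP' i j h).1, (hP' i j h).2.1⟩
    · exact ⟨(hP i j h).1, (hP i j h).2.1⟩
  · intro i j hij
    simp only [mixP, if_neg hij, if_neg (Ne.symm hij)]
    by_cases h : (i, j) ∈ T ∨ (j, i) ∈ T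
    · rw [if_pos h, if_pos (Or.symm h)]
      exact (hP' i j hij).2.2
    · rw [if_neg h, if_neg (fun hc => h (Or.symm hc))]
      exact (hP i j hij).2.2

end P17

/-- for a deterministic tournament won by `i*` with `c` crucial pairs,
the ε-worst drop is `cε` to first order: `lim_{ε→0⁺} (1 - wp_ε(i*,P,σ))/ε = c`. -/
theorem det_drop_first_order (n : ℕ)
    (P : Fin (2 ^ n) → Fin (2 ^ n) → ℝ) (hP : IsCompMatrix P) (hdet : IsDet P)
    (σ : BT (Fin (2 ^ n)) n) (hσ : IsDraw σ)
    (istar : Fin (2 ^ n)) (hwin : wd P σ istar = 1) :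
    Filter.Tendsto (fun ε : ℝ => (1 - wpe istar P ε σ) / ε)
      (nhdsWithin 0 (Set.Ioi 0))
      (nhds (({q : Fin (2 ^ n) × Fin (2 ^ n) |
        Crucial P σ istar q.1 q.2}.ncard : ℝ))) := by
  classical
  have hU : P17.Uniq σ := fun i => (hσ i).le
  set Pc := P17.clean P with hPcdef
  have hPcG : P17.Good Pc := P17.clean_good hP
  set Sw : Finset (Fin (2 ^ n) × Fin (2 ^ n)) :=
    Finset.univ.filter (fun p => p.1 ≠ p.2 ∧ P p.1 p.2 = 1) with hSwdef
  set Scru : Finset (Fin (2 ^ n) × Fin (2 ^ n)) :=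
    Sw.filter (fun p => wd (swapPair P p.1 p.2) σ istar = 0) with hScrudef
  have hSwmem : ∀ p : Fin (2 ^ n) × Fin (2 ^ n),
      p ∈ Sw ↔ (p.1 ≠ p.2 ∧ P p.1 p.2 = 1) := by
    intro p; rw [hSwdef]; simp
  have hset : {q : Fin (2 ^ n) × Fin (2 ^ n) | Crucial P σ istar q.1 q.2} = ↑Scru := by
    ext q
    rw [Set.mem_setOf_eq, Finset.mem_coe, hScrudef, Finset.mem_filter, hSwmem]
    constructor
    · rintro ⟨h1, h2, h3⟩; exact ⟨⟨h1, h2⟩, h3⟩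
    · rintro ⟨⟨h1, h2⟩, h3⟩; exact ⟨h1, h2, h3⟩
  rw [hset, Set.ncard_coe_finset]
  have hPba : ∀ {a b : Fin (2 ^ n)}, a ≠ b → P a b = 1 → P b a = 0 := by
    intro a b hab h1
    have := (hP a b hab).2.2; linarith
  have hnotboth : ∀ {a b : Fin (2 ^ n)}, (a, b) ∈ Sw → (b, a) ∉ Sw := by
    intro a b hab hba
    rw [hSwmem] at hab hba
    have h0 := hPba hab.1 hab.2
    rw [hba.2] at h0; norm_num at h0
  have hcover : ∀ i j : Fin (2 ^ n), i ≠ j → (i, j) ∈ Sw ∨ (j, i) ∈ Sw := by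
    intro i j hij
    rcases hdet i j hij with h0 | h1
    · right; rw [hSwmem]
      refine ⟨Ne.symm hij, ?_⟩
      have := (hP i j hij).2.2; simp only [] ; linarith
    · left; rw [hSwmem]; exact ⟨hij, h1⟩
  have hW01 : ∀ a b : Fin (2 ^ n), wd (swapPair P a b) σ istar = 0 ∨
      wd (swapPair P a b) σ istar = 1 := by
    intro a b
    obtain ⟨w, _, hw⟩ := P17.wd_det (P17.clean_good (P17.swapPair_comp hP a b))
      (fun i j hij => by
        simpa [P17.clean, if_neg hij] using P17.swapPair_det hdet a b i j hij) σ hU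
    have hwi := hw istar
    rw [P17.wd_clean hU istar] at hwi
    rw [hwi]
    by_cases h : istar = w
    · right; simp [h]
    · left; simp [h]
  obtain ⟨Kc, hKdef⟩ : ∃ Kc : ℝ, Kc = P17.Cst n
      + ((Finset.univ : Finset (Fin (2 ^ n) × Fin (2 ^ n))).card : ℝ) := ⟨_, rfl⟩
  have hKnn : 0 ≤ Kc := by
    rw [hKdef]; exact add_nonneg (P17.Cst_nonneg n) (Nat.cast_nonneg _)
  have hcardK : ∀ T : Finset (Fin (2 ^ n) × Fin (2 ^ n)),
      (T.card : ℝ) ≤ ((Finset.univ : Finset (Fin (2 ^ n) × Fin (2 ^ n))).card : ℝ) := by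
    intro T
    exact_mod_cast Finset.card_le_univ T
  -- THE KEY TELESCOPING ESTIMATE
  have key : ∀ (ε : ℝ), 0 ≤ ε → ∀ P' : Fin (2 ^ n) → Fin (2 ^ n) → ℝ, IsCompMatrix P' →
      (∀ i j : Fin (2 ^ n), i ≠ j → |P' i j - P i j| ≤ ε) →
      ∀ T : Finset (Fin (2 ^ n) × Fin (2 ^ n)), T ⊆ Sw →
      |wd (P17.mixP P P' T) σ istar
        - (1 - ∑ q ∈ T, (1 - P' q.1 q.2) * (1 - wd (swapPair P q.1 q.2) σ istar))|
        ≤ Kc * ε ^ 2 * T.card := by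
    intro ε hε P' hP'c hP'd T
    induction T using Finset.induction_on with
    | empty =>
        intro _
        have hm : P17.mixP P P' ∅ = Pc := by
          funext i j; simp [P17.mixP, P17.clean, hPcdef]
        have h1 : wd Pc σ istar = 1 := by rw [hPcdef, P17.wd_clean hU]; exact hwin
        rw [hm]
        simp [h1]
    | @insert p T hpT ih =>
        intro hsub
        obtain ⟨a, b⟩ := p
        have hpSw : (a, b) ∈ Sw := hsub (Finset.mem_insert_self _ _)
        have hTsub : T ⊆ Sw := fun q hq => hsub (Finset.mem_insert_of_mem hq)
        have hab : a ≠ b := ((hSwmem _).1 hpSw).1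
        have hPab : P a b = 1 := ((hSwmem _).1 hpSw).2
        have hPba' : P b a = 0 := hPba hab hPab
        have hP'ba : P' b a = 1 - P' a b := by
          have := (hP'c a b hab).2.2; linarith
        set M := P17.mixP P P' T with hMdef
        have hMG : P17.Good M := P17.mixP_good hP hP'c T
        have hmix : P17.mixP P P' (insert (a, b) T) = updPair M a b (P' a b) := by
          funext i j
          simp only [hMdef, P17.mixP, updPair]
          by_cases h1 : i = a ∧ j = b
          · obtain ⟨rfl, rfl⟩ := h1
            rw [if_neg hab, if_pos (Or.inl (Finset.mem_insert_self _ _)),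
              if_pos (⟨rfl, rfl⟩ : i = i ∧ j = j)]
          · by_cases h2 : i = b ∧ j = a
            · obtain ⟨rfl, rfl⟩ := h2
              rw [if_neg (Ne.symm hab), if_pos (Or.inr (Finset.mem_insert_self _ _)),
                if_neg h1, if_pos (⟨rfl, rfl⟩ : i = i ∧ j = j), hP'ba]
            · rw [if_neg h1, if_neg h2]
              by_cases hij : i = j
              · rw [if_pos hij, if_pos hij]
              · rw [if_neg hij, if_neg hij]
                have hmem : ((i, j) ∈ insert (a, b) T ∨ (j, i) ∈ insert (a, b) T)
                    ↔ ((i, j) ∈ T ∨ (j, i) ∈ T) := by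
                  constructor
                  · rintro (h | h)
                    · rcases Finset.mem_insert.1 h with he | hT
                      · exact absurd ⟨(Prod.ext_iff.1 he).1, (Prod.ext_iff.1 he).2⟩ h1
                      · exact Or.inl hT
                    · rcases Finset.mem_insert.1 h with he | hT
                      · exact absurd ⟨(Prod.ext_iff.1 he).2, (Prod.ext_iff.1 he).1⟩ h2
                      · exact Or.inr hT
                  · rintro (h | h)
                    · exact Or.inl (Finset.mem_insert_of_mem h)
                    · exact Or.inr (Finset.mem_insert_of_mem h)
                rw [if_congr hmem rfl rfl]
        have hupd1 : updPair M a b 1 = M := by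
          funext i j
          simp only [updPair]
          by_cases h1 : i = a ∧ j = b
          · obtain ⟨rfl, rfl⟩ := h1
            rw [if_pos ⟨rfl, rfl⟩, hMdef]
            simp only [P17.mixP]
            have hnb : ¬ ((i, j) ∈ T ∨ (j, i) ∈ T) := by
              rintro (h | h)
              · exact hpT h
              · exact hnotboth hpSw (hTsub h)
            rw [if_neg hab, if_neg hnb, hPab]
          · by_cases h2 : i = b ∧ j = a
            · obtain ⟨rfl, rfl⟩ := h2
              rw [if_neg h1, if_pos ⟨rfl, rfl⟩, hMdef]
              simp only [P17.mixP]
              have hnb : ¬ ((i, j) ∈ T ∨ (j, i) ∈ T) := by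
                rintro (h | h)
                · exact hnotboth hpSw (hTsub h)
                · exact hpT h
              rw [if_neg (Ne.symm hab), if_neg hnb, hPba']
              norm_num
            · rw [if_neg h1, if_neg h2]
        have haff := P17.wd_updPair_affine (Q := M) hab σ hU (P' a b) istar
        rw [hupd1] at haff
        have hMPc : ∀ i j, |M i j - Pc i j| ≤ ε := by
          intro i j
          rw [hMdef, hPcdef]
          simp only [P17.mixP, P17.clean]
          by_cases hij : i = j
          · rw [if_pos hij, if_pos hij]; simpa using hε
          · rw [if_neg hij, if_neg hij]
            by_cases hm : (i, j) ∈ T ∨ (j, i) ∈ T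
            · rw [if_pos hm]; exact hP'd i j hij
            · rw [if_neg hm]; simpa using hε
        have hslip : |wd (updPair M a b 0) σ istar - wd (updPair Pc a b 0) σ istar|
            ≤ P17.Cst n * ε := by
          apply P17.wd_lip_single hε σ hU _ _
            (P17.Good.updPair_ hMG hab le_rfl zero_le_one)
            (P17.Good.updPair_ hPcG hab le_rfl zero_le_one)
          intro i j
          simp only [updPair]
          by_cases h1 : i = a ∧ j = b
          · rw [if_pos h1, if_pos h1]; simpa using hε
          · by_cases h2 : i = b ∧ j = a
            · rw [if_neg h1, if_pos h2, if_neg h1, if_pos h2]; simpa using hε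
            · rw [if_neg h1, if_neg h2, if_neg h1, if_neg h2]; exact hMPc i j
        have hbase : wd (updPair Pc a b 0) σ istar = wd (swapPair P a b) σ istar := by
          apply P17.wd_offdiag_congr _ σ hU
          intro i j hij
          simp only [updPair, swapPair, hPcdef, P17.clean]
          by_cases h1 : i = a ∧ j = b
          · obtain ⟨rfl, rfl⟩ := h1
            rw [if_pos ⟨rfl, rfl⟩, if_pos ⟨rfl, rfl⟩, hPba']
          · by_cases h2 : i = b ∧ j = a
            · obtain ⟨rfl, rfl⟩ := h2
              rw [if_neg h1, if_pos ⟨rfl, rfl⟩, if_neg h1, if_pos ⟨rfl, rfl⟩, hPab]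
              norm_num
            · rw [if_neg h1, if_neg h2, if_neg h1, if_neg h2, if_neg hij]
        rw [hbase] at hslip
        have hih := ih hTsub
        have ht'le : P' a b ≤ 1 := (hP'c a b hab).2.1
        have ht'0 : 0 ≤ P' a b := (hP'c a b hab).1
        have ht'ge : 1 - ε ≤ P' a b := by
          have h := hP'd a b hab
          rw [hPab] at h
          linarith [(abs_le.1 h).1]
        have hWT : ∀ q ∈ T,
            0 ≤ (1 - P' q.1 q.2) * (1 - wd (swapPair P q.1 q.2) σ istar) ∧
            (1 - P' q.1 q.2) * (1 - wd (swapPair P q.1 q.2) σ istar) ≤ ε := by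
          intro q hq
          have hqSw := hTsub hq
          have hq1 : q.1 ≠ q.2 := ((hSwmem q).1 hqSw).1
          have hq2 : P q.1 q.2 = 1 := ((hSwmem q).1 hqSw).2
          have l1 : P' q.1 q.2 ≤ 1 := (hP'c _ _ hq1).2.1
          have l2 : 1 - ε ≤ P' q.1 q.2 := by
            have h := hP'd q.1 q.2 hq1
            rw [hq2] at h
            linarith [(abs_le.1 h).1]
          rcases hW01 q.1 q.2 with h0 | h1
          · rw [h0]; constructor <;> nlinarith
          · rw [h1]; constructor <;> nlinarith
        have hsumT : |∑ q ∈ T, (1 - P' q.1 q.2) * (1 - wd (swapPair P q.1 q.2) σ istar)|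
            ≤ ε * T.card := by
          rw [abs_of_nonneg (Finset.sum_nonneg fun q hq => (hWT q hq).1)]
          calc ∑ q ∈ T, (1 - P' q.1 q.2) * (1 - wd (swapPair P q.1 q.2) σ istar)
              ≤ ∑ _q ∈ T, ε := Finset.sum_le_sum fun q hq => (hWT q hq).2
            _ = ε * T.card := by rw [Finset.sum_const, nsmul_eq_mul]; ring
        rw [hmix, haff, Finset.sum_insert hpT, Finset.card_insert_of_notMem hpT]
        set S0 := wd (updPair M a b 0) σ istar with hS0def
        set Wab := wd (swapPair P a b) σ istar with hWabdef
        set WM := wd M σ istar with hWMdef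
        set ST := ∑ q ∈ T, (1 - P' q.1 q.2) * (1 - wd (swapPair P q.1 q.2) σ istar)
          with hSTdef
        have hexpr : (1 - P' a b) * S0 + P' a b * WM
            - (1 - ((1 - P' a b) * (1 - Wab) + ST))
            = (1 - P' a b) * (S0 - Wab) + P' a b * (WM - (1 - ST))
              + (1 - P' a b) * ST := by ring
        rw [hexpr]
        have b1 : |(1 - P' a b) * (S0 - Wab)| ≤ ε * (P17.Cst n * ε) := by
          rw [abs_mul, abs_of_nonneg (by linarith : (0:ℝ) ≤ 1 - P' a b)]
          exact mul_le_mul (by linarith) hslip (abs_nonneg _) hε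
        have b2 : |P' a b * (WM - (1 - ST))| ≤ 1 * (Kc * ε ^ 2 * T.card) := by
          rw [abs_mul, abs_of_nonneg ht'0]
          exact mul_le_mul ht'le hih (abs_nonneg _) zero_le_one
        have b3 : |(1 - P' a b) * ST| ≤ ε * (ε * T.card) := by
          rw [abs_mul, abs_of_nonneg (by linarith : (0:ℝ) ≤ 1 - P' a b)]
          exact mul_le_mul (by linarith) hsumT (abs_nonneg _) hε
        have htri : |(1 - P' a b) * (S0 - Wab) + P' a b * (WM - (1 - ST))
            + (1 - P' a b) * ST|
            ≤ |(1 - P' a b) * (S0 - Wab)| + |P' a b * (WM - (1 - ST))|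
              + |(1 - P' a b) * ST| :=
          (abs_add_le _ _).trans (by gcongr; exact abs_add_le _ _)
        have hfin : ε * (P17.Cst n * ε) + 1 * (Kc * ε ^ 2 * T.card) + ε * (ε * T.card)
            ≤ Kc * ε ^ 2 * (T.card + 1) := by
          have h1 : ε * (P17.Cst n * ε) = P17.Cst n * ε ^ 2 := by ring
          have h2 : ε * (ε * T.card) = (T.card : ℝ) * ε ^ 2 := by ring
          have h3 : (P17.Cst n + (T.card : ℝ)) * ε ^ 2 ≤ Kc * ε ^ 2 := by
            apply mul_le_mul_of_nonneg_right _ (sq_nonneg ε)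
            rw [hKdef]
            have := hcardK T
            linarith
          linarith only [h1, h2, h3]
        have hcast : ((T.card + 1 : ℕ) : ℝ) = (T.card : ℝ) + 1 := by push_cast; ring
        rw [hcast]
        refine le_trans htri (le_trans ?_ hfin)
        linarith only [b1, b2, b3]
  have hmixSw : ∀ P' : Fin (2 ^ n) → Fin (2 ^ n) → ℝ, IsCompMatrix P' →
      P17.mixP P P' Sw = P17.clean P' := by
    intro P' hP'c
    funext i j
    simp only [P17.mixP, P17.clean]
    by_cases hij : i = j
    · rw [if_pos hij, if_pos hij]
    · rw [if_neg hij, if_neg hij, if_pos (hcover i j hij)]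
  have hcsum : ∑ q ∈ Sw, (1 - wd (swapPair P q.1 q.2) σ istar) = (Scru.card : ℝ) := by
    have hsplit := Finset.sum_filter_add_sum_filter_not Sw
      (fun q => wd (swapPair P q.1 q.2) σ istar = 0)
      (fun q => (1 : ℝ) - wd (swapPair P q.1 q.2) σ istar)
    rw [← hsplit, ← hScrudef]
    have e1 : ∀ q ∈ Scru, (1 : ℝ) - wd (swapPair P q.1 q.2) σ istar = 1 := by
      intro q hq
      rw [hScrudef, Finset.mem_filter] at hq
      rw [hq.2]; ring
    have e2 : ∀ q ∈ Sw.filter (fun q => ¬ wd (swapPair P q.1 q.2) σ istar = 0),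
        (1 : ℝ) - wd (swapPair P q.1 q.2) σ istar = 0 := by
      intro q hq
      rcases hW01 q.1 q.2 with h0 | h1
      · exact absurd h0 (Finset.mem_filter.1 hq).2
      · rw [h1]; ring
    rw [Finset.sum_congr rfl e1, Finset.sum_congr rfl e2, Finset.sum_const,
      Finset.sum_const]
    simp
  have hlower : ∀ ε : ℝ, 0 ≤ ε → ∀ P', P' ∈ perturbs P ε →
      1 - ε * Scru.card - Kc * ε ^ 2 * Sw.card ≤ wd P' σ istar := by
    intro ε hε P' hP'
    obtain ⟨hP'c, hP'd⟩ := hP'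
    have hk := key ε hε P' hP'c hP'd Sw (le_refl _)
    rw [hmixSw P' hP'c, P17.wd_clean hU] at hk
    have hs1 : ∑ q ∈ Sw, (1 - P' q.1 q.2) * (1 - wd (swapPair P q.1 q.2) σ istar)
        ≤ ε * Scru.card := by
      rw [← hcsum, Finset.mul_sum]
      apply Finset.sum_le_sum
      intro q hq
      have hq1 : q.1 ≠ q.2 := ((hSwmem q).1 hq).1
      have hq2 : P q.1 q.2 = 1 := ((hSwmem q).1 hq).2
      have l2 : 1 - P' q.1 q.2 ≤ ε := by
        have h := hP'd q.1 q.2 hq1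
        rw [hq2] at h
        linarith [(abs_le.1 h).1]
      rcases hW01 q.1 q.2 with h0 | h1
      · rw [h0]; simp only [sub_zero, mul_one]; exact l2
      · rw [h1]; simp
    linarith [(abs_le.1 hk).1, (abs_le.1 hk).2, hs1]
  have hupper : ∀ ε : ℝ, 0 ≤ ε → ε ≤ 1/2 →
      ∃ P' ∈ perturbs P ε, wd P' σ istar ≤ 1 - ε * Scru.card + Kc * ε ^ 2 * Sw.card := by
    intro ε hε hε2
    have hScruSw : Scru ⊆ Sw := by rw [hScrudef]; exact Finset.filter_subset _ _
    have hmemScru : ∀ q ∈ Scru, q.1 ≠ q.2 ∧ P q.1 q.2 = 1 :=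
      fun q hq => (hSwmem q).1 (hScruSw hq)
    have hnb : ∀ {a b : Fin (2 ^ n)}, (a, b) ∈ Scru → (b, a) ∉ Scru :=
      fun {a b} h h' => hnotboth (hScruSw h) (hScruSw h')
    have hP'c : IsCompMatrix (detPerturb P Scru ε) := by
      intro i j hij
      simp only [detPerturb]
      by_cases h1 : (i, j) ∈ Scru
      · rw [if_pos h1, if_neg (hnb h1), if_pos h1]
        refine ⟨by linarith, by linarith, by ring⟩
      · by_cases h2 : (j, i) ∈ Scru
        · rw [if_neg h1, if_pos h2, if_pos h2]
          refine ⟨by linarith, by linarith, by ring⟩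
        · rw [if_neg h1, if_neg h2, if_neg h2, if_neg h1]
          exact hP i j hij
    have hP'd : ∀ i j : Fin (2 ^ n), i ≠ j → |detPerturb P Scru ε i j - P i j| ≤ ε := by
      intro i j hij
      simp only [detPerturb]
      by_cases h1 : (i, j) ∈ Scru
      · rw [if_pos h1, ((hmemScru _ h1).2 : P i j = 1)]
        rw [show (1 : ℝ) - ε - 1 = -ε by ring, abs_neg, abs_of_nonneg hε]
      · by_cases h2 : (j, i) ∈ Scru
        · rw [if_neg h1, if_pos h2]
          have hji : P j i = 1 := (hmemScru _ h2).2
          have hPij : P i j = 0 := by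
            have := (hP i j hij).2.2; linarith
          rw [hPij, sub_zero, abs_of_nonneg hε]
        · rw [if_neg h1, if_neg h2]
          simpa using hε
    refine ⟨detPerturb P Scru ε, ⟨hP'c, hP'd⟩, ?_⟩
    have hk := key ε hε _ hP'c hP'd Sw (le_refl _)
    rw [hmixSw _ hP'c, P17.wd_clean hU] at hk
    have hs2 : ∑ q ∈ Sw, (1 - detPerturb P Scru ε q.1 q.2)
        * (1 - wd (swapPair P q.1 q.2) σ istar) = ε * Scru.card := by
      have hsplit := Finset.sum_filter_add_sum_filter_not Sw
        (fun q => wd (swapPair P q.1 q.2) σ istar = 0)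
        (fun q => (1 - detPerturb P Scru ε q.1 q.2)
          * (1 - wd (swapPair P q.1 q.2) σ istar))
      rw [← hsplit, ← hScrudef]
      have e1 : ∀ q ∈ Scru, (1 - detPerturb P Scru ε q.1 q.2)
          * (1 - wd (swapPair P q.1 q.2) σ istar) = ε := by
        intro q hq
        have hq0 : wd (swapPair P q.1 q.2) σ istar = 0 := by
          rw [hScrudef, Finset.mem_filter] at hq
          exact hq.2
        have ht' : detPerturb P Scru ε q.1 q.2 = 1 - ε := by
          simp only [detPerturb]
          rw [if_pos (show (q.1, q.2) ∈ Scru from by rwa [Prod.mk.eta])]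
        rw [hq0, ht']; ring
      have e2 : ∀ q ∈ Sw.filter (fun q => ¬ wd (swapPair P q.1 q.2) σ istar = 0),
          (1 - detPerturb P Scru ε q.1 q.2)
            * (1 - wd (swapPair P q.1 q.2) σ istar) = 0 := by
        intro q hq
        rcases hW01 q.1 q.2 with h0 | h1
        · exact absurd h0 (Finset.mem_filter.1 hq).2
        · rw [h1]; ring
      rw [Finset.sum_congr rfl e1, Finset.sum_congr rfl e2, Finset.sum_const,
        Finset.sum_const]
      simp [mul_comm]
    rw [hs2] at hk
    linarith [(abs_le.1 hk).1, (abs_le.1 hk).2]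
  have hPself : ∀ ε : ℝ, 0 ≤ ε → P ∈ perturbs P ε := by
    intro ε hε
    exact ⟨hP, fun i j _ => by simpa using hε⟩
  have hbdd : ∀ ε : ℝ, BddBelow ((fun P' => wd P' σ istar) '' perturbs P ε) := by
    intro ε
    refine ⟨0, ?_⟩
    rintro x ⟨P', hP', rfl⟩
    show 0 ≤ wd P' σ istar
    rw [← P17.wd_clean (Q := P') hU]
    exact P17.wd_nonneg (P17.clean_good hP'.1).1 σ istar
  have hwpe_low : ∀ ε : ℝ, 0 ≤ ε →
      1 - ε * Scru.card - Kc * ε ^ 2 * Sw.card ≤ wpe istar P ε σ := by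
    intro ε hε
    simp only [wpe]
    refine le_csInf ⟨wd P σ istar, ⟨P, hPself ε hε, rfl⟩⟩ ?_
    rintro x ⟨P', hP', rfl⟩
    exact hlower ε hε P' hP'
  have hwpe_up : ∀ ε : ℝ, 0 ≤ ε → ε ≤ 1/2 →
      wpe istar P ε σ ≤ 1 - ε * Scru.card + Kc * ε ^ 2 * Sw.card := by
    intro ε hε hε2
    obtain ⟨P', hmem, hle⟩ := hupper ε hε hε2
    simp only [wpe]
    exact le_trans (csInf_le (hbdd ε) ⟨P', hmem, rfl⟩) hle
  -- squeeze
  have hg1 : Filter.Tendsto (fun ε : ℝ => (Scru.card : ℝ) - Kc * Sw.card * ε)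
      (nhdsWithin 0 (Set.Ioi 0)) (nhds (Scru.card : ℝ)) := by
    have h : Filter.Tendsto (fun ε : ℝ => (Scru.card : ℝ) - Kc * Sw.card * ε)
        (nhds 0) (nhds ((Scru.card : ℝ) - Kc * Sw.card * 0)) :=
      Continuous.tendsto (continuous_const.sub (continuous_const.mul continuous_id)) 0
    simp only [mul_zero, sub_zero] at h
    exact h.mono_left nhdsWithin_le_nhds
  have hg2 : Filter.Tendsto (fun ε : ℝ => (Scru.card : ℝ) + Kc * Sw.card * ε)
      (nhdsWithin 0 (Set.Ioi 0)) (nhds (Scru.card : ℝ)) := by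
    have h : Filter.Tendsto (fun ε : ℝ => (Scru.card : ℝ) + Kc * Sw.card * ε)
        (nhds 0) (nhds ((Scru.card : ℝ) + Kc * Sw.card * 0)) :=
      Continuous.tendsto (continuous_const.add (continuous_const.mul continuous_id)) 0
    simp only [mul_zero, add_zero] at h
    exact h.mono_left nhdsWithin_le_nhds
  have hIoc : Set.Ioc (0 : ℝ) (1/2) ∈ nhdsWithin (0 : ℝ) (Set.Ioi 0) :=
    Ioc_mem_nhdsGT_of_mem (Set.left_mem_Ico.2 (by norm_num))
  refine tendsto_of_tendsto_of_tendsto_of_le_of_le' hg1 hg2 ?_ ?_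
  · filter_upwards [hIoc] with ε hε
    have h1 := hwpe_up ε hε.1.le hε.2
    rw [le_div_iff₀ hε.1]
    have he : ((Scru.card : ℝ) - Kc * Sw.card * ε) * ε
        = ε * Scru.card - Kc * ε ^ 2 * Sw.card := by ring
    rw [he]
    linarith only [h1]
  · filter_upwards [hIoc] with ε hε
    have h1 := hwpe_low ε hε.1.le
    rw [div_le_iff₀ hε.1]
    have he : ((Scru.card : ℝ) + Kc * Sw.card * ε) * ε
        = ε * Scru.card + Kc * ε ^ 2 * Sw.card := by ring
    rw [he]
    linarith only [h1]
end
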